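/- arXiv:1408.2967 — 7 statements merged into one kernel-verified Lean document; each statement's English description precedes it below -/
import Mathlib

section
/- Let n ≥ 2 and let a, c_1, …, c_n be positive real numbers. Then the inequality 1/(a + c_1 α_1) + 1/(a + c_2 α_2) + ⋯ + 1/(a + c_n α_n) ≤ 1 holds for all positive real numbers α_1, …, α_n satisfying α_1 α_2 ⋯ α_n = 1 if and only if a ≥ n − 1 and (c_1 c_2 ⋯ c_n)^{1/n} ≥ n − a. -/
/-!
Necessity: letting all `αᵢ` but one tend to `0` gives `(n - 1) / a ≤ 1`, and `αᵢ = G / cᵢ`, with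
`G` the geometric mean of the `cᵢ`, gives `n / (a + G) ≤ 1`.

Sufficiency: write `cᵢ αᵢ = G yᵢ` with `∏ yᵢ = 1` and put `g = max (n - a) 0 ∈ [0, 1]`. Each term
is at most `1 / (n - g + g yᵢ)`, and `∑ 1 / (n - g + g yᵢ) ≤ 1` amounts to `∑ zᵢ ≥ 1` for
`zᵢ = 1 / (g + (n - g) / yᵢ)`. If `∑ z < 1`, weighted AM-GM with the doubly stochastic weights
`wᵢⱼ = (1 - g [i = j]) / (n - g)` gives `∏ⱼ zⱼ ^ wᵢⱼ ≤ (∑ z - g zᵢ) / (n - g) < zᵢ / yᵢ` for every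
`i`, and multiplying over `i` yields `∏ z < ∏ z`.
-/

open Finset Filter Topology

section MeanWeight

variable {ι : Type*} [Fintype ι] [DecidableEq ι] {g : ℝ}

noncomputable def meanWeight (g : ℝ) (i j : ι) : ℝ :=
  (1 - if i = j then g else 0) / (Fintype.card ι - g)

lemma meanWeight_nonneg (hg1 : g ≤ 1) (hgn : g < Fintype.card ι) (i j : ι) :
    0 ≤ meanWeight g i j := by
  unfold meanWeight
  split_ifs <;> apply div_nonneg <;> linarith

lemma sum_meanWeight_row (hgn : g < Fintype.card ι) (i : ι) : ∑ j, meanWeight g i j = 1 := by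
  simp only [meanWeight, ← sum_div, sum_sub_distrib, sum_ite_eq, mem_univ, if_true]
  simpa using div_self (sub_pos.2 hgn).ne'

lemma sum_meanWeight_col (hgn : g < Fintype.card ι) (j : ι) : ∑ i, meanWeight g i j = 1 := by
  simp only [meanWeight, ← sum_div, sum_sub_distrib, sum_ite_eq', mem_univ, if_true]
  simpa using div_self (sub_pos.2 hgn).ne'

lemma sum_meanWeight_mul (i : ι) (z : ι → ℝ) :
    ∑ j, meanWeight g i j * z j = (∑ j, z j - g * z i) / (Fintype.card ι - g) := by
  simp only [meanWeight, div_mul_eq_mul_div, ← sum_div, sub_mul, one_mul, ite_mul, zero_mul,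
    sum_sub_distrib, sum_ite_eq, mem_univ, if_true]

lemma prod_rpow_meanWeight_le (hg1 : g ≤ 1) (hgn : g < Fintype.card ι) {z : ι → ℝ}
    (hz : ∀ j, 0 ≤ z j) (i : ι) :
    ∏ j, z j ^ meanWeight g i j ≤ (∑ j, z j - g * z i) / (Fintype.card ι - g) :=
  sum_meanWeight_mul (g := g) i z ▸ Real.geom_mean_le_arith_mean_weighted univ _ z
    (fun j _ => meanWeight_nonneg hg1 hgn i j) (sum_meanWeight_row hgn i) (fun j _ => hz j)

lemma prod_prod_rpow_meanWeight (hgn : g < Fintype.card ι) {z : ι → ℝ} (hz : ∀ j, 0 < z j) :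
    ∏ i, ∏ j, z j ^ meanWeight g i j = ∏ j, z j := by
  rw [Finset.prod_comm]
  refine prod_congr rfl fun j _ => ?_
  rw [← Real.rpow_sum_of_pos (hz j), sum_meanWeight_col hgn, Real.rpow_one]

end MeanWeight

section

variable {ι : Type*} [Fintype ι] {g a : ℝ} {c : ι → ℝ}

theorem one_le_sum_one_div_add_mul (hg0 : 0 ≤ g) (hg1 : g ≤ 1) (hgn : g < Fintype.card ι)
    {v : ι → ℝ} (hv : ∀ i, 0 < v i) (hprod : ∏ i, v i = 1) :
    1 ≤ ∑ i, 1 / (g + (Fintype.card ι - g) * v i) := by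
  classical
  have hb : 0 < (Fintype.card ι : ℝ) - g := sub_pos.2 hgn
  set z : ι → ℝ := fun i => 1 / (g + (Fintype.card ι - g) * v i) with hz_def
  have hz : ∀ i, 0 < z i := fun i => by have := hv i; positivity
  have hne : (univ : Finset ι).Nonempty :=
    univ_nonempty_iff.2 (Fintype.card_pos_iff.1 (by exact_mod_cast hg0.trans_lt hgn))
  by_contra! hsum
  have hlt : ∀ i, ∏ j, z j ^ meanWeight g i j < v i * z i := fun i =>
    calc ∏ j, z j ^ meanWeight g i j ≤ (∑ j, z j - g * z i) / (Fintype.card ι - g) :=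
          prod_rpow_meanWeight_le hg1 hgn (fun j => (hz j).le) i
      _ < (1 - g * z i) / (Fintype.card ι - g) := by gcongr
      _ = v i * z i := by
          have hd : 0 < g + (Fintype.card ι - g) * v i := by have := hv i; positivity
          simp only [hz_def]
          field_simp
          ring
  have := prod_lt_prod_of_nonempty (fun i _ => prod_pos fun j _ => Real.rpow_pos_of_pos (hz j) _)
    (fun i _ => hlt i) hne
  rw [prod_prod_rpow_meanWeight hgn hz, prod_mul_distrib, hprod, one_mul] at this
  exact this.false

theorem sum_one_div_sub_add_mul_le_one (hg0 : 0 ≤ g) (hg1 : g ≤ 1) (hgn : g < Fintype.card ι)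
    {y : ι → ℝ} (hy : ∀ i, 0 < y i) (hprod : ∏ i, y i = 1) :
    ∑ i, 1 / (Fintype.card ι - g + g * y i) ≤ 1 := by
  have hb : 0 < (Fintype.card ι : ℝ) - g := sub_pos.2 hgn
  have key := one_le_sum_one_div_add_mul hg0 hg1 hgn (v := fun i => (y i)⁻¹)
    (fun i => inv_pos.2 (hy i)) (by rw [prod_inv_distrib, hprod, inv_one])
  calc ∑ i, 1 / (Fintype.card ι - g + g * y i)
      = ∑ i, (1 - g * (1 / (g + (Fintype.card ι - g) * (y i)⁻¹))) / (Fintype.card ι - g) := by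
        refine sum_congr rfl fun i _ => ?_
        have := hy i
        field_simp
        ring
    _ = (Fintype.card ι - g * ∑ i, 1 / (g + (Fintype.card ι - g) * (y i)⁻¹)) /
          (Fintype.card ι - g) := by
        rw [← sum_div, sum_sub_distrib, ← mul_sum]
        simp
    _ ≤ (Fintype.card ι - g * 1) / (Fintype.card ι - g) := by gcongr
    _ = 1 := by rw [mul_one, div_self hb.ne']

theorem card_sub_one_le_of_forall_sum_le_one [Nonempty ι] (ha : 0 < a) (hc : ∀ i, 0 ≤ c i)
    (h : ∀ α : ι → ℝ, (∀ i, 0 < α i) → ∏ i, α i = 1 → ∑ i, 1 / (a + c i * α i) ≤ 1) :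
    (Fintype.card ι : ℝ) - 1 ≤ a := by
  classical
  obtain ⟨i₀⟩ := ‹Nonempty ι›
  set f : ℝ → ℝ := fun t => ∑ i ∈ univ.erase i₀, 1 / (a + c i * t) with hf_def
  have hf : ∀ t > 0, f t ≤ 1 := by
    intro t ht
    set α := Function.update (fun _ => t) i₀ (t ^ (Fintype.card ι - 1))⁻¹
    have hα : ∀ i, 0 < α i := by
      intro i
      rcases eq_or_ne i i₀ with rfl | hi
      · simp only [α, Function.update_self]; positivity
      · simp [α, hi, ht]
    have hprod : ∏ i, α i = 1 := by
      rw [prod_update_of_mem (mem_univ _)]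
      simp [prod_const, card_sdiff, inv_mul_cancel₀ (pow_pos ht _).ne']
    calc f t = ∑ i ∈ univ.erase i₀, 1 / (a + c i * α i) :=
          sum_congr rfl fun i hi => by simp [α, ne_of_mem_erase hi]
      _ ≤ ∑ i, 1 / (a + c i * α i) :=
          sum_le_sum_of_subset_of_nonneg (erase_subset _ _) fun i _ _ => by
            have := hc i; have := hα i; positivity
      _ ≤ 1 := h α hα hprod
  have hcont : ContinuousAt f 0 := by
    fun_prop (disch := simp [ha.ne'])
  have := le_of_tendsto (hcont.tendsto.mono_left (nhdsWithin_le_nhds (s := Set.Ioi 0)))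
    (eventually_nhdsWithin_of_forall hf)
  simp only [hf_def, mul_zero, add_zero, sum_const, card_erase_of_mem (mem_univ i₀),
    card_univ, nsmul_eq_mul, mul_one_div, div_le_one ha] at this
  rwa [Nat.cast_pred Fintype.card_pos] at this

lemma rpow_one_div_card_pow_eq_prod [Nonempty ι] (hc : ∀ i, 0 ≤ c i) :
    ((∏ i, c i) ^ ((1 : ℝ) / Fintype.card ι)) ^ Fintype.card ι = ∏ i, c i := by
  rw [one_div, Real.rpow_inv_natCast_pow (prod_nonneg fun i _ => hc i) Fintype.card_ne_zero]

theorem card_sub_le_rpow_of_forall_sum_le_one [Nonempty ι] (ha : 0 ≤ a) (hc : ∀ i, 0 < c i)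
    (h : ∀ α : ι → ℝ, (∀ i, 0 < α i) → ∏ i, α i = 1 → ∑ i, 1 / (a + c i * α i) ≤ 1) :
    (Fintype.card ι : ℝ) - a ≤ (∏ i, c i) ^ ((1 : ℝ) / Fintype.card ι) := by
  set G := (∏ i, c i) ^ ((1 : ℝ) / Fintype.card ι)
  have hG : 0 < G := Real.rpow_pos_of_pos (prod_pos fun i _ => hc i) _
  have hsum := h (fun i => G / c i) (fun i => div_pos hG (hc i)) <| by
    rw [prod_div_distrib, prod_const, card_univ, rpow_one_div_card_pow_eq_prod fun i => (hc i).le,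
      div_self (prod_pos fun i _ => hc i).ne']
  simp only [mul_div_cancel₀ _ (hc _).ne', sum_const, card_univ, nsmul_eq_mul, mul_one_div,
    div_le_one (by positivity : 0 < a + G)] at hsum
  linarith

theorem sum_one_div_add_mul_le_one [Nonempty ι] (ha : 0 < a) (hc : ∀ i, 0 < c i)
    (h₁ : (Fintype.card ι : ℝ) - 1 ≤ a)
    (h₂ : (Fintype.card ι : ℝ) - a ≤ (∏ i, c i) ^ ((1 : ℝ) / Fintype.card ι))
    {α : ι → ℝ} (hα : ∀ i, 0 < α i) (hprod : ∏ i, α i = 1) :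
    ∑ i, 1 / (a + c i * α i) ≤ 1 := by
  set G := (∏ i, c i) ^ ((1 : ℝ) / Fintype.card ι)
  have hG : 0 < G := Real.rpow_pos_of_pos (prod_pos fun i _ => hc i) _
  set g := max ((Fintype.card ι : ℝ) - a) 0
  set y : ι → ℝ := fun i => c i * α i / G
  have hy : ∀ i, 0 < y i := fun i => by have := hc i; have := hα i; positivity
  have hprod_y : ∏ i, y i = 1 := by
    rw [prod_div_distrib, prod_mul_distrib, hprod, mul_one, prod_const, card_univ,
      rpow_one_div_card_pow_eq_prod fun i => (hc i).le, div_self (prod_pos fun i _ => hc i).ne']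
  have hgn : g < Fintype.card ι := max_lt (by linarith) (by exact_mod_cast Fintype.card_pos)
  calc ∑ i, 1 / (a + c i * α i) ≤ ∑ i, 1 / (Fintype.card ι - g + g * y i) := by
        refine sum_le_sum fun i _ => one_div_le_one_div_of_le ?_ ?_
        · exact add_pos_of_pos_of_nonneg (sub_pos.2 hgn) (mul_nonneg (le_max_right _ _) (hy i).le)
        · have hcα : c i * α i = G * y i := (mul_div_cancel₀ _ hG.ne').symm
          rw [hcα]
          gcongr
          · linarith [le_max_left ((Fintype.card ι : ℝ) - a) 0]
          · exact (hy i).le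
          · exact max_le h₂ hG.le
    _ ≤ 1 := sum_one_div_sub_add_mul_le_one (le_max_right _ _) (max_le (by linarith) zero_le_one)
        hgn hy hprod_y

end

/-- **Ha's inequality criterion.**
Let `n ≥ 2` and let `a, c₁, …, cₙ` be positive real numbers.  The inequality
`∑ i, 1 / (a + cᵢ * αᵢ) ≤ 1` holds for all positive reals `α₁, …, αₙ` with `α₁ ⋯ αₙ = 1`
if and only if `a ≥ n - 1` and `(c₁ ⋯ cₙ)^(1/n) ≥ n - a`. -/
theorem sum_inv_le_one_iff (n : ℕ) (hn : 2 ≤ n) (a : ℝ) (ha : 0 < a)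
    (c : Fin n → ℝ) (hc : ∀ i, 0 < c i) :
    (∀ α : Fin n → ℝ, (∀ i, 0 < α i) → ∏ i, α i = 1 →
        ∑ i, 1 / (a + c i * α i) ≤ 1) ↔
      ((n : ℝ) - 1 ≤ a ∧ (n : ℝ) - a ≤ (∏ i, c i) ^ ((1 : ℝ) / n)) := by
  have : Nonempty (Fin n) := ⟨⟨0, by omega⟩⟩
  constructor
  · intro h
    exact ⟨by simpa using card_sub_one_le_of_forall_sum_le_one ha (fun i => (hc i).le) h,
      by simpa using card_sub_le_rpow_of_forall_sum_le_one ha.le hc h⟩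
  · rintro ⟨h₁, h₂⟩ α hα hprod
    exact sum_one_div_add_mul_le_one ha hc (by simpa using h₁) (by simpa using h₂) hα hprod
end

section
/- Let n be a positive integer and let X be a Hermitian n×n matrix over the quaternions ℍ. Then X is a primitive idempotent (i.e., X ≠ 0, X² = X, and X cannot be written as a sum of two nonzero Hermitian idempotent matrices) if and only if X = u u* for some vector u ∈ ℍⁿ with ‖u‖ = 1. -/
open Matrix
open scoped Quaternion

private lemma quat_middle_sum {n : ℕ} (a b : ℍ[ℝ]) (f g : Fin n → ℍ[ℝ]) :
    ∑ k, a * f k * (g k * b) = a * (∑ k, f k * g k) * b := by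
  simp only [Finset.mul_sum, Finset.sum_mul, mul_assoc]

private lemma quat_left_sum {n : ℕ} (a : ℍ[ℝ]) (f g : Fin n → ℍ[ℝ]) :
    ∑ k, a * f k * g k = a * (∑ k, f k * g k) := by
  simp only [Finset.mul_sum, mul_assoc]

private lemma quat_right_sum {n : ℕ} (b : ℍ[ℝ]) (f g : Fin n → ℍ[ℝ]) :
    ∑ k, f k * (g k * b) = (∑ k, f k * g k) * b := by
  simp only [Finset.sum_mul, mul_assoc]

private lemma quat_coe_sum {n : ℕ} (f : Fin n → ℝ) :
    ((∑ k, f k : ℝ) : ℍ[ℝ]) = ∑ k, ((f k : ℝ) : ℍ[ℝ]) := by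
  have h := map_sum (algebraMap ℝ ℍ[ℝ]) f Finset.univ
  rwa [Quaternion.algebraMap_def] at h

private lemma quat_star_mul_self (x : ℍ[ℝ]) : star x * x = ((‖x‖ ^ 2 : ℝ) : ℍ[ℝ]) := by
  rw [Quaternion.star_mul_self, Quaternion.normSq_eq_norm_mul_self, sq]

private lemma quat_star_real_smul (r : ℝ) (x : ℍ[ℝ]) : star (r • x) = r • star x := by
  ext <;> simp

private lemma quat_coe_ne_zero {r : ℝ} (h : r ≠ 0) : ((r : ℝ) : ℍ[ℝ]) ≠ 0 := fun h0 =>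
  h (by simpa using Quaternion.coe_injective (h0.trans (Quaternion.coe_zero).symm))

private lemma quat_add_self_eq_zero {a : ℍ[ℝ]} (h : a + a = 0) : a = 0 := by
  have h2 : (2 : ℝ) • a = 0 := by rw [two_smul]; exact h
  simpa using (smul_eq_zero.mp h2).resolve_left (by norm_num)

/-- **Primitive idempotents of quaternionic Hermitian matrices.**
A Hermitian `n × n` quaternionic matrix `X` is a primitive idempotent (nonzero, idempotent,
and not the sum of two nonzero Hermitian idempotents) if and only if `X = u u*` for some
vector `u ∈ ℍⁿ` of norm `1`. -/
theorem isPrimitiveIdempotent_iff_vecMulVec (n : ℕ) (hn : 0 < n)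
    (X : Matrix (Fin n) (Fin n) ℍ[ℝ]) (hX : X.IsHermitian) :
    (X ≠ 0 ∧ X * X = X ∧
        ¬∃ Y Z : Matrix (Fin n) (Fin n) ℍ[ℝ],
          Y.IsHermitian ∧ Z.IsHermitian ∧ Y * Y = Y ∧ Z * Z = Z ∧
          Y ≠ 0 ∧ Z ≠ 0 ∧ X = Y + Z) ↔
      ∃ u : Fin n → ℍ[ℝ], (∑ l, ‖u l‖ ^ 2 = 1) ∧ X = vecMulVec u (star u) := by
  constructor
  · rintro ⟨hX0, hXi, hprim⟩
    have hherm : ∀ i j : Fin n, star (X j i) = X i j := hX.apply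
    have hent : ∀ i j : Fin n, ∑ k, X i k * X k j = X i j := by
      intro i j
      have h := congrFun (congrFun hXi i) j
      rwa [Matrix.mul_apply] at h
    obtain ⟨l, m0, hm0⟩ : ∃ l m0 : Fin n, X m0 l ≠ 0 := by
      by_contra h
      push_neg at h
      exact hX0 (Matrix.ext fun i j => h j i)
    set r : ℝ := ∑ k, ‖X k l‖ ^ 2 with hr
    have hrpos : 0 < r := by
      refine Finset.sum_pos' (fun i _ => sq_nonneg _) ⟨m0, Finset.mem_univ _, ?_⟩
      exact pow_pos (norm_pos_iff.mpr hm0) 2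
    have hrne : ((r : ℝ) : ℍ[ℝ]) ≠ 0 := quat_coe_ne_zero hrpos.ne'
    have hdot : ∑ k, star (X k l) * X k l = ((r : ℝ) : ℍ[ℝ]) := by
      calc ∑ k, star (X k l) * X k l = ∑ k, ((‖X k l‖ ^ 2 : ℝ) : ℍ[ℝ]) :=
            Finset.sum_congr rfl fun k _ => quat_star_mul_self _
        _ = ((r : ℝ) : ℍ[ℝ]) := (quat_coe_sum _).symm
    have hrow : ∀ j, ∑ k, star (X k l) * X k j = star (X j l) := by
      intro j
      calc ∑ k, star (X k l) * X k j = ∑ k, X l k * X k j :=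
            Finset.sum_congr rfl fun k _ => by rw [hherm l k]
        _ = X l j := hent l j
        _ = star (X j l) := (hherm l j).symm
    have hdiag : X l l = ((r : ℝ) : ℍ[ℝ]) := by
      calc X l l = ∑ k, X l k * X k l := (hent l l).symm
        _ = ∑ k, star (X k l) * X k l :=
            Finset.sum_congr rfl fun k _ => by rw [hherm l k]
        _ = ((r : ℝ) : ℍ[ℝ]) := hdot
    set u0 : Fin n → ℍ[ℝ] := fun i => X i l with hu0
    set P : Matrix (Fin n) (Fin n) ℍ[ℝ] := vecMulVec u0 (star u0) with hP
    have hPapp : ∀ i j, P i j = X i l * star (X j l) := fun i j => rfl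
    have hPherm : P.IsHermitian := by
      refine Matrix.ext fun i j => ?_
      rw [Matrix.conjTranspose_apply, hPapp, hPapp, StarMul.star_mul, star_star]
    have hPP : P * P = r • P := by
      refine Matrix.ext fun i j => ?_
      rw [Matrix.mul_apply, Matrix.smul_apply]
      simp only [hPapp]
      rw [quat_middle_sum, hdot, ← Quaternion.coe_commutes, mul_assoc,
        Quaternion.coe_mul_eq_smul]
    have hXP : X * P = P := by
      refine Matrix.ext fun i j => ?_
      rw [Matrix.mul_apply]
      simp only [hPapp]
      calc ∑ k, X i k * (X k l * star (X j l)) = (∑ k, X i k * X k l) * star (X j l) :=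
            quat_right_sum _ _ _
        _ = X i l * star (X j l) := by rw [hent i l]
    have hPX : P * X = P := by
      refine Matrix.ext fun i j => ?_
      rw [Matrix.mul_apply]
      simp only [hPapp]
      calc ∑ k, X i l * star (X k l) * X k j = X i l * (∑ k, star (X k l) * X k j) :=
            quat_left_sum _ _ _
        _ = X i l * star (X j l) := by rw [hrow j]
    set Y : Matrix (Fin n) (Fin n) ℍ[ℝ] := r⁻¹ • P with hY
    have hYherm : Y.IsHermitian := by
      refine Matrix.ext fun i j => ?_
      rw [Matrix.conjTranspose_apply, hY, Matrix.smul_apply, Matrix.smul_apply,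
        quat_star_real_smul]
      exact congrArg (r⁻¹ • ·) (hPherm.apply i j)
    have hYY : Y * Y = Y := by
      rw [hY, Matrix.smul_mul, Matrix.mul_smul, hPP, smul_smul, smul_smul,
        mul_assoc, inv_mul_cancel₀ hrpos.ne', mul_one]
    have hXY : X * Y = Y := by rw [hY, Matrix.mul_smul, hXP]
    have hYX : Y * X = Y := by rw [hY, Matrix.smul_mul, hPX]
    have hYll : Y l l = ((r : ℝ) : ℍ[ℝ]) := by
      rw [hY, Matrix.smul_apply, hPapp, hdiag, Quaternion.star_coe, ← Quaternion.coe_mul,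
        Quaternion.smul_coe]
      congr 1
      field_simp
    have hYne : Y ≠ 0 := by
      intro h0
      apply hrne
      rw [← hYll, h0, Matrix.zero_apply]
    have hZherm : (X - Y).IsHermitian := hX.sub hYherm
    have hZZ : (X - Y) * (X - Y) = X - Y := by
      rw [sub_mul, mul_sub, mul_sub, hXi, hXY, hYX, hYY]
      abel
    have hZ0 : X - Y = 0 := by
      by_contra hne
      exact hprim ⟨Y, X - Y, hYherm, hZherm, hYY, hZZ, hYne, hne, by abel⟩
    have hXeq : X = Y := by rwa [sub_eq_zero] at hZ0
    set s : ℝ := Real.sqrt r with hs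
    have hspos : 0 < s := Real.sqrt_pos.mpr hrpos
    have hss : s * s = r := Real.mul_self_sqrt hrpos.le
    refine ⟨fun i => s⁻¹ • X i l, ?_, ?_⟩
    · calc ∑ i, ‖s⁻¹ • X i l‖ ^ 2 = ∑ i, s⁻¹ ^ 2 * ‖X i l‖ ^ 2 := by
            refine Finset.sum_congr rfl fun i _ => ?_
            rw [norm_smul, Real.norm_eq_abs, abs_of_pos (inv_pos.mpr hspos), mul_pow]
        _ = s⁻¹ ^ 2 * r := by rw [← Finset.mul_sum]
        _ = 1 := by
            rw [sq, ← hss]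
            field_simp
    · refine Matrix.ext fun i j => ?_
      rw [Matrix.vecMulVec_apply, Pi.star_apply, quat_star_real_smul, smul_mul_assoc,
        mul_smul_comm, smul_smul]
      conv_lhs => rw [hXeq, hY]
      rw [Matrix.smul_apply, hPapp]
      congr 1
      rw [← hss, mul_inv]
  · rintro ⟨u, hu, rfl⟩
    have hu1 : ∑ k, star (u k) * u k = (1 : ℍ[ℝ]) := by
      calc ∑ k, star (u k) * u k = ∑ k, ((‖u k‖ ^ 2 : ℝ) : ℍ[ℝ]) :=
            Finset.sum_congr rfl fun k _ => quat_star_mul_self _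
        _ = ((∑ k, ‖u k‖ ^ 2 : ℝ) : ℍ[ℝ]) := (quat_coe_sum _).symm
        _ = 1 := by rw [hu, Quaternion.coe_one]
    obtain ⟨l0, hl0⟩ : ∃ l0, u l0 ≠ 0 := by
      by_contra h
      push_neg at h
      rw [Finset.sum_eq_zero (fun i _ => by rw [h i]; simp)] at hu
      exact one_ne_zero hu.symm
    have hS2 : vecMulVec u (star u) * vecMulVec u (star u) = vecMulVec u (star u) := by
      refine Matrix.ext fun i j => ?_
      rw [Matrix.mul_apply]
      simp only [Matrix.vecMulVec_apply, Pi.star_apply]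
      rw [quat_middle_sum, hu1, mul_one]
    refine ⟨?_, hS2, ?_⟩
    · intro h0
      have h1 := congrFun (congrFun h0 l0) l0
      simp only [Matrix.vecMulVec_apply, Pi.star_apply, Matrix.zero_apply] at h1
      exact (mul_ne_zero hl0 (star_ne_zero.mpr hl0)) h1
    · rintro ⟨Y, Z, hY, hZ, hYY, hZZ, hYne, hZne, hsum⟩
      have h2 : (Y + Z) * (Y + Z) = Y + Z := by rw [← hsum]; exact hS2
      rw [add_mul, mul_add, mul_add, hYY, hZZ] at h2
      have h3 : Y * Z + Z * Y = 0 := by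
        calc Y * Z + Z * Y = (Y + Y * Z + (Z * Y + Z)) - (Y + Z) := by abel
          _ = 0 := by rw [h2]; abel
      have h5 : Y * Z + Y * Z * Y = 0 := by
        calc Y * Z + Y * Z * Y = Y * (Y * Z + Z * Y) := by
              rw [mul_add, ← mul_assoc, ← mul_assoc, hYY]
          _ = 0 := by rw [h3, mul_zero]
      have h6 : Y * Z * Y + Z * Y = 0 := by
        calc Y * Z * Y + Z * Y = (Y * Z + Z * Y) * Y := by
              rw [add_mul, mul_assoc Z Y Y, hYY]
          _ = 0 := by rw [h3, zero_mul]
      have h7 : Y * Z = Z * Y :=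
        (eq_neg_of_add_eq_zero_left h5).trans (eq_neg_of_add_eq_zero_right h6).symm
      have hYZ0 : Y * Z = 0 := by
        have h8 : Y * Z + Y * Z = 0 := by nth_rewrite 2 [h7]; exact h3
        refine Matrix.ext fun i j => ?_
        have h9 : (Y * Z) i j + (Y * Z) i j = 0 := by
          have := congrFun (congrFun h8 i) j
          simpa using this
        simpa using quat_add_self_eq_zero h9
      have hZY0 : Z * Y = 0 := h7 ▸ hYZ0
      set v : Fin n → ℍ[ℝ] := fun i => ∑ k, Y i k * u k with hv
      set w : Fin n → ℍ[ℝ] := fun i => ∑ k, Z i k * u k with hw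
      have hYv : ∀ i j, Y i j = v i * star (u j) := by
        intro i j
        have hYS : Y * vecMulVec u (star u) = Y := by
          rw [hsum, mul_add, hYY, hYZ0, add_zero]
        have h := congrFun (congrFun hYS i) j
        rw [Matrix.mul_apply] at h
        simp only [Matrix.vecMulVec_apply, Pi.star_apply] at h
        rw [← h, quat_right_sum]
      have hZw : ∀ i j, Z i j = w i * star (u j) := by
        intro i j
        have hZS : Z * vecMulVec u (star u) = Z := by
          rw [hsum, mul_add, hZY0, hZZ, zero_add]
        have h := congrFun (congrFun hZS i) j
        rw [Matrix.mul_apply] at h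
        simp only [Matrix.vecMulVec_apply, Pi.star_apply] at h
        rw [← h, quat_right_sum]
      set c : ℍ[ℝ] := ∑ k, star (u k) * v k with hc
      set d : ℍ[ℝ] := ∑ k, star (u k) * w k with hd
      obtain ⟨i0, hi0⟩ : ∃ i0, v i0 ≠ 0 := by
        by_contra h
        push_neg at h
        exact hYne (Matrix.ext fun i j => by rw [hYv i j, h i, zero_mul, Matrix.zero_apply])
      obtain ⟨i1, hi1⟩ : ∃ i1, w i1 ≠ 0 := by
        by_contra h
        push_neg at h
        exact hZne (Matrix.ext fun i j => by rw [hZw i j, h i, zero_mul, Matrix.zero_apply])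
      have hcup : ∀ i j, v i * c * star (u j) = v i * star (u j) := by
        intro i j
        have h := congrFun (congrFun hYY i) j
        rw [Matrix.mul_apply] at h
        simp only [hYv] at h
        rwa [quat_middle_sum] at h
      have hdup : ∀ i j, w i * d * star (u j) = w i * star (u j) := by
        intro i j
        have h := congrFun (congrFun hZZ i) j
        rw [Matrix.mul_apply] at h
        simp only [hZw] at h
        rwa [quat_middle_sum] at h
      have hc1 : c = 1 := by
        have h1 : v i0 * c * star (u l0) = v i0 * 1 * star (u l0) := by
          rw [mul_one]; exact hcup i0 l0
        exact mul_left_cancel₀ hi0 (mul_right_cancel₀ (star_ne_zero.mpr hl0) h1)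
      have hd1 : d = 1 := by
        have h1 : w i1 * d * star (u l0) = w i1 * 1 * star (u l0) := by
          rw [mul_one]; exact hdup i1 l0
        exact mul_left_cancel₀ hi1 (mul_right_cancel₀ (star_ne_zero.mpr hl0) h1)
      have hvw : ∀ k, v k + w k = u k := by
        intro k
        calc v k + w k = ∑ m, (Y k m + Z k m) * u m := by
              rw [hv, hw, ← Finset.sum_add_distrib]
              exact Finset.sum_congr rfl fun m _ => (add_mul _ _ _).symm
          _ = ∑ m, u k * star (u m) * u m := by
              refine Finset.sum_congr rfl fun m _ => ?_
              have h := congrFun (congrFun hsum k) m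
              simp only [Matrix.vecMulVec_apply, Pi.star_apply, Matrix.add_apply] at h
              rw [← h]
          _ = u k * (∑ m, star (u m) * u m) := quat_left_sum _ _ _
          _ = u k := by rw [hu1, mul_one]
      have hcd : c + d = 1 := by
        calc c + d = ∑ k, star (u k) * (v k + w k) := by
              rw [hc, hd, ← Finset.sum_add_distrib]
              exact Finset.sum_congr rfl fun k _ => (mul_add _ _ _).symm
          _ = ∑ k, star (u k) * u k := Finset.sum_congr rfl fun k _ => by rw [hvw k]
          _ = 1 := hu1
      rw [hc1, hd1] at hcd
      exact one_ne_zero (add_left_cancel (hcd.trans (add_zero (1 : ℍ[ℝ])).symm))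
end

section
/- Let n be a positive integer and let A be a real-linear map from the real vector space of Hermitian n×n complex matrices to itself. Then ⟨A(X), Y⟩ ≥ 0 holds for all positive semidefinite matrices X, Y with ⟨X, Y⟩ = 0 if and only if v* A(u u*) v ≥ 0 for all u, v ∈ ℂⁿ with v* u = 0. -/
/-!
Every positive semidefinite matrix is a sum of rank-one matrices `u uᴴ`. Writing
`X = ∑ uᵢ uᵢᴴ` and `Y = ∑ vⱼ vⱼᴴ`, one gets `Tr(X Y) = ∑ |vⱼᴴ uᵢ|²`, so `Tr(X Y) = 0` forces
every `vⱼ` to be orthogonal to every `uᵢ`, while additivity of `A` gives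
`Tr(A(X) Y) = ∑ vⱼᴴ A(uᵢ uᵢᴴ) vⱼ`, a sum of terms that are nonnegative by the rank-one condition.
Conversely, the rank-one condition is the case `X = u uᴴ`, `Y = v vᴴ`.
-/

open Matrix
open scoped ComplexOrder

namespace Matrix

variable {𝕜 n : Type*} [RCLike 𝕜] [Fintype n]

theorem trace_mul_vecMulVec_star (M : Matrix n n 𝕜) (v : n → 𝕜) :
    (M * vecMulVec v (star v)).trace = star v ⬝ᵥ (M *ᵥ v) := by
  rw [mul_vecMulVec, trace_vecMulVec, dotProduct_comm]

theorem star_dotProduct_vecMulVec_star_mulVec (u v : n → 𝕜) :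
    star v ⬝ᵥ (vecMulVec u (star u) *ᵥ v) = star (star v ⬝ᵥ u) * (star v ⬝ᵥ u) := by
  rw [vecMulVec_mulVec, dotProduct_smul, star_dotProduct u v, op_smul_eq_mul, mul_comm]

section SumOfRankOne

variable {ι κ : Type*} [Fintype ι] [Fintype κ]

theorem trace_mul_sum_vecMulVec_star (M : Matrix n n 𝕜) (v : κ → n → 𝕜) :
    (M * ∑ j, vecMulVec (v j) (star (v j))).trace = ∑ j, star (v j) ⬝ᵥ (M *ᵥ v j) := by
  simp only [Matrix.mul_sum, trace_sum, trace_mul_vecMulVec_star]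

theorem star_dotProduct_eq_zero_of_trace_sum_vecMulVec_star_mul_eq_zero
    {u : ι → n → 𝕜} {v : κ → n → 𝕜}
    (h : ((∑ i, vecMulVec (u i) (star (u i))) * ∑ j, vecMulVec (v j) (star (v j))).trace = 0)
    (i : ι) (j : κ) : star (v j) ⬝ᵥ u i = 0 := by
  simp only [trace_mul_sum_vecMulVec_star, sum_mulVec, dotProduct_sum,
    star_dotProduct_vecMulVec_star_mulVec] at h
  have hnonneg (j : κ) (i : ι) : 0 ≤ star (star (v j) ⬝ᵥ u i) * (star (v j) ⬝ᵥ u i) :=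
    star_mul_self_nonneg _
  rw [Fintype.sum_eq_zero_iff_of_nonneg fun j ↦ Fintype.sum_nonneg (hnonneg j)] at h
  have hij := congrFun ((Fintype.sum_eq_zero_iff_of_nonneg (hnonneg j)).mp (congrFun h j)) i
  exact (CStarRing.star_mul_self_eq_zero_iff _).mp hij

end SumOfRankOne

end Matrix

section CrossPositive

variable {𝕜 n : Type*} [RCLike 𝕜] [Fintype n]

def IsCrossPositive (A : Matrix n n 𝕜 → Matrix n n 𝕜) : Prop :=
  ∀ X Y : Matrix n n 𝕜, X.PosSemidef → Y.PosSemidef → (X * Y).trace = 0 → 0 ≤ (A X * Y).trace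

theorem IsCrossPositive.star_dotProduct_mulVec_nonneg {A : Matrix n n 𝕜 → Matrix n n 𝕜}
    (hA : IsCrossPositive A) {u v : n → 𝕜} (huv : star v ⬝ᵥ u = 0) :
    0 ≤ star v ⬝ᵥ (A (vecMulVec u (star u)) *ᵥ v) := by
  rw [← trace_mul_vecMulVec_star]
  refine hA _ _ (posSemidef_vecMulVec_self_star u) (posSemidef_vecMulVec_self_star v) ?_
  rw [trace_mul_vecMulVec_star, star_dotProduct_vecMulVec_star_mulVec, huv, mul_zero]

theorem isCrossPositive_of_star_dotProduct_mulVec_nonneg (A : Matrix n n 𝕜 →+ Matrix n n 𝕜)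
    (hA : ∀ u v : n → 𝕜, star v ⬝ᵥ u = 0 → 0 ≤ star v ⬝ᵥ (A (vecMulVec u (star u)) *ᵥ v)) :
    IsCrossPositive A := by
  intro X Y hX hY hXY
  obtain ⟨k, u, rfl⟩ := posSemidef_iff_eq_sum_vecMulVec.mp hX
  obtain ⟨l, v, rfl⟩ := posSemidef_iff_eq_sum_vecMulVec.mp hY
  have horth := star_dotProduct_eq_zero_of_trace_sum_vecMulVec_star_mul_eq_zero hXY
  rw [trace_mul_sum_vecMulVec_star, map_sum]
  simp only [sum_mulVec, dotProduct_sum]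
  exact Fintype.sum_nonneg fun j ↦ Fintype.sum_nonneg fun i ↦ hA _ _ (horth i j)

end CrossPositive

theorem cross_positive_iff_rank_one_general (n : ℕ)
    (A : Matrix (Fin n) (Fin n) ℂ →ₗ[ℝ] Matrix (Fin n) (Fin n) ℂ) :
    (∀ X Y : Matrix (Fin n) (Fin n) ℂ, X.PosSemidef → Y.PosSemidef →
        (X * Y).trace = 0 → 0 ≤ ((A X) * Y).trace) ↔
      ∀ u v : Fin n → ℂ, star v ⬝ᵥ u = 0 →
        0 ≤ star v ⬝ᵥ (A (vecMulVec u (star u)) *ᵥ v) :=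
  ⟨fun hA _ _ ↦ IsCrossPositive.star_dotProduct_mulVec_nonneg (A := A) hA,
    isCrossPositive_of_star_dotProduct_mulVec_nonneg A.toAddMonoidHom⟩

/-- **Cross-positivity on rank-one matrices suffices.**
For a real-linear map `A` on the space of Hermitian `n × n` complex matrices (i.e. a real-linear
map on matrices sending Hermitian matrices to Hermitian matrices), one has
`⟨A X, Y⟩ = Tr((A X) Y) ≥ 0` for all positive semidefinite `X, Y` with `⟨X, Y⟩ = Tr(X Y) = 0`
if and only if `v* A(u u*) v ≥ 0` for all `u, v ∈ ℂⁿ` with `v* u = 0`. -/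
theorem cross_positive_iff_rank_one (n : ℕ) (hn : 0 < n)
    (A : Matrix (Fin n) (Fin n) ℂ →ₗ[ℝ] Matrix (Fin n) (Fin n) ℂ)
    (hA : ∀ X : Matrix (Fin n) (Fin n) ℂ, X.IsHermitian → (A X).IsHermitian) :
    (∀ X Y : Matrix (Fin n) (Fin n) ℂ, X.PosSemidef → Y.PosSemidef →
        (X * Y).trace = 0 → 0 ≤ ((A X) * Y).trace) ↔
      ∀ u v : Fin n → ℂ, star v ⬝ᵥ u = 0 →
        0 ≤ star v ⬝ᵥ (A (vecMulVec u (star u)) *ᵥ v) :=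
  cross_positive_iff_rank_one_general n A
end

section
/- Let n be a positive integer, H ∈ M_n(ℂ), and let A₂ be a real-linear map from the real vector space of Hermitian n×n complex matrices to itself such that A₂(X) is positive semidefinite whenever X is positive semidefinite. Define A(X) = H X + X H* + A₂(X). If u, v ∈ ℂⁿ are nonzero vectors with v* u = 0 and v* A(u u*) v = 0, then v* H u = (1/‖u‖²) · v* A(u u*) u. -/
open Matrix
open scoped ComplexOrder

/-! With `P = u u*` and `v ⟂ u`, the terms `H P` and `P H*` vanish in `v* A(P) v`, so
`v* A₂(P) v = 0`. As `A₂(P)` is positive semidefinite this forces `A₂(P) v = 0`, hence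
`v* A(P) u = ‖u‖² v* H u`. -/

namespace Matrix

section vecMulVec

variable {l m n α : Type*} [Fintype l] [Fintype m] [Fintype n] [CommSemiring α]

theorem dotProduct_mul_vecMulVec_mulVec (z : l → α) (X : Matrix l m α) (x : m → α)
    (y w : n → α) : z ⬝ᵥ ((X * vecMulVec x y) *ᵥ w) = (z ⬝ᵥ (X *ᵥ x)) * (y ⬝ᵥ w) := by
  rw [mul_vecMulVec, vecMulVec_mulVec, op_smul_eq_smul, dotProduct_smul,
    smul_eq_mul, mul_comm]

theorem dotProduct_vecMulVec_mul_mulVec (z x : l → α) (y : m → α) (X : Matrix m n α)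
    (w : n → α) : z ⬝ᵥ ((vecMulVec x y * X) *ᵥ w) = (z ⬝ᵥ x) * (y ⬝ᵥ (X *ᵥ w)) := by
  rw [vecMulVec_mul, vecMulVec_mulVec, op_smul_eq_smul, dotProduct_smul,
    smul_eq_mul, dotProduct_mulVec, mul_comm]

end vecMulVec

theorem PosSemidef.star_dotProduct_mulVec_eq_zero {n 𝕜 : Type*} [Fintype n] [RCLike 𝕜]
    {M : Matrix n n 𝕜} (hM : M.PosSemidef) {v : n → 𝕜} (hv : star v ⬝ᵥ (M *ᵥ v) = 0)
    (w : n → 𝕜) : star v ⬝ᵥ (M *ᵥ w) = 0 := by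
  rw [dotProduct_mulVec, ← hM.1.eq, ← star_mulVec, (hM.dotProduct_mulVec_zero_iff v).1 hv,
    star_zero, zero_dotProduct]

end Matrix

theorem cross_positive_zero_general (n : ℕ)
    (H : Matrix (Fin n) (Fin n) ℂ)
    (A₂ : Matrix (Fin n) (Fin n) ℂ →ₗ[ℝ] Matrix (Fin n) (Fin n) ℂ)
    (hA₂pos : ∀ X : Matrix (Fin n) (Fin n) ℂ, X.PosSemidef → (A₂ X).PosSemidef)
    (A : Matrix (Fin n) (Fin n) ℂ → Matrix (Fin n) (Fin n) ℂ)
    (hA : ∀ X : Matrix (Fin n) (Fin n) ℂ, A X = H * X + X * Hᴴ + A₂ X)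
    (u v : Fin n → ℂ) (hu : u ≠ 0)
    (horth : star v ⬝ᵥ u = 0)
    (hzero : star v ⬝ᵥ (A (vecMulVec u (star u)) *ᵥ v) = 0) :
    star v ⬝ᵥ (H *ᵥ u) =
      (1 / (star u ⬝ᵥ u)) * (star v ⬝ᵥ (A (vecMulVec u (star u)) *ᵥ u)) := by
  set P : Matrix (Fin n) (Fin n) ℂ := vecMulVec u (star u)
  have expand : ∀ w, star v ⬝ᵥ (A P *ᵥ w) =
      (star v ⬝ᵥ (H *ᵥ u)) * (star u ⬝ᵥ w) + star v ⬝ᵥ (A₂ P *ᵥ w) := by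
    intro w
    rw [hA, add_mulVec, add_mulVec, dotProduct_add, dotProduct_add,
      dotProduct_mul_vecMulVec_mulVec, dotProduct_vecMulVec_mul_mulVec, horth, zero_mul,
      add_zero]
  have horth' : star u ⬝ᵥ v = 0 := by rw [star_dotProduct, horth, star_zero]
  rw [expand, horth', mul_zero, zero_add] at hzero
  have hA₂vu : star v ⬝ᵥ (A₂ P *ᵥ u) = 0 :=
    (hA₂pos P (posSemidef_vecMulVec_self_star u)).star_dotProduct_mulVec_eq_zero hzero u
  have huu : star u ⬝ᵥ u ≠ 0 := fun h => hu (dotProduct_star_self_eq_zero.mp h)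
  rw [expand, hA₂vu, add_zero]
  field_simp

/-- **Zeros of cross-positive maps of the special form.**
Let `H ∈ M_n(ℂ)` and let `A₂` be a real-linear map on Hermitian `n × n` complex matrices
(i.e. a real-linear map on matrices sending Hermitian matrices to Hermitian matrices) mapping
positive semidefinite matrices to positive semidefinite matrices, and set
`A X = H X + X H* + A₂ X`.  If `u, v ∈ ℂⁿ` are nonzero with `v* u = 0` and `v* A(u u*) v = 0`,
then `v* H u = (1 / ‖u‖²) ⬝ (v* A(u u*) u)`. -/
theorem cross_positive_zero (n : ℕ) (hn : 0 < n)
    (H : Matrix (Fin n) (Fin n) ℂ)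
    (A₂ : Matrix (Fin n) (Fin n) ℂ →ₗ[ℝ] Matrix (Fin n) (Fin n) ℂ)
    (hA₂herm : ∀ X : Matrix (Fin n) (Fin n) ℂ, X.IsHermitian → (A₂ X).IsHermitian)
    (hA₂pos : ∀ X : Matrix (Fin n) (Fin n) ℂ, X.PosSemidef → (A₂ X).PosSemidef)
    (A : Matrix (Fin n) (Fin n) ℂ → Matrix (Fin n) (Fin n) ℂ)
    (hA : ∀ X : Matrix (Fin n) (Fin n) ℂ, A X = H * X + X * Hᴴ + A₂ X)
    (u v : Fin n → ℂ) (hu : u ≠ 0) (hv : v ≠ 0)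
    (horth : star v ⬝ᵥ u = 0)
    (hzero : star v ⬝ᵥ (A (vecMulVec u (star u)) *ᵥ v) = 0) :
    star v ⬝ᵥ (H *ᵥ u) =
      (1 / (star u ⬝ᵥ u)) * (star v ⬝ᵥ (A (vecMulVec u (star u)) *ᵥ u)) :=
  cross_positive_zero_general n H A₂ hA₂pos A hA u v hu horth hzero
end

section
/- Let n ≥ 3 and let B be the linear map on Hermitian n×n complex matrices defined in the context. Then for all u, v ∈ ℂⁿ with v* u = 0, one has v* B(u u*) v ≥ 0. (Consequently, B generates a one-parameter semigroup of linear maps preserving the cone of positive semidefinite complex Hermitian matrices.) -/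
open Matrix
open scoped ComplexOrder

/-- The exotic drift `B` on complex Hermitian `n × n` matrices: with `p = (n-2)(n²-n-1)/2` and
`q = (n-1)(n²-n-1)`, and indices taken `0`-based and cyclically, its diagonal entries are
`(B X)₀₀ = X₁₁ - X₀₀` and `(B X)_{ll} = (n-1)² (X_{l+1,l+1} - X_{ll})` for `l ≠ 0`, while its
off-diagonal entries are `(B X)_{lm} = -p X_{lm}` if `l = 0` or `m = 0`, and
`(B X)_{lm} = -q X_{lm}` otherwise (the coefficients being real, this matches the prescription
`(B X)_{ml} = conj((B X)_{lm})` on Hermitian matrices). -/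
noncomputable def BmapC (n : ℕ) [NeZero n] (X : Matrix (Fin n) (Fin n) ℂ) :
    Matrix (Fin n) (Fin n) ℂ :=
  Matrix.of fun l m =>
    if l = m then
      (if l = 0 then 1 else ((n : ℝ) - 1) ^ 2) • (X (l + 1) (l + 1) - X l l)
    else if l = 0 ∨ m = 0 then
      (-(((n : ℝ) - 2) * ((n : ℝ) ^ 2 - n - 1) / 2)) • X l m
    else
      (-(((n : ℝ) - 1) * ((n : ℝ) ^ 2 - n - 1))) • X l m

/-!
Write `B X = diag (δ X) - q X + r (E X + X E)`, where `E` is the projection onto the first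
coordinate and `r = q - p = n (n² - n - 1) / 2`. For `X = u u*` and `v* u = 0` both `X v` and
`v* X` vanish, so only the diagonal part contributes, and `v* B(u u*) v` becomes a real form in
`a = |u|` and `b = |v|` (entrywise), while `v* u = 0` leaves the triangle inequality
`a₀ b₀ ≤ ∑_{l ≠ 0} a_l b_l`.

With `N = n - 1`, the products `t_l = a_l b_l` (`l ≠ 0`) have the same product as the shifted
products `a₁ b_N` and `a_{l+1} b_l` (`0 < l < N`) occurring in the form. Kober's bound on the
AM-GM gap, `(∑ t)² ≤ (N - 1) ∑ t² + N G²` with `G` the geometric mean of the `t_l`, combined with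
AM-GM for the shifted products, gives `(N + 1) T² ≤ 2 a₁ b_N T + R` at `T = ∑ t`, with `R ≥ 0`.
This is a convex condition on `T` that holds at `T = 0`, hence also at `T = a₀ b₀ ∈ [0, ∑ t]`;
the AM-GM step `2 N a₁ b_N a₀ b₀ ≤ a₁² b₀² + N² a₀² b_N²` then finishes.
-/

open Finset

theorem Multiset.exists_le_one_of_prod_le_one {m : Multiset ℝ} (hm : m ≠ 0) (h : m.prod ≤ 1) :
    ∃ x ∈ m, x ≤ 1 := by
  by_contra! hlt
  have := Multiset.prod_map_lt_prod_map hm (fun _ => 1) id (fun _ _ => one_pos) hlt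
  simp only [Multiset.map_const', Multiset.prod_replicate, one_pow, Multiset.map_id] at this
  linarith

theorem Multiset.exists_one_le_of_one_le_prod {m : Multiset ℝ} (hm : m ≠ 0)
    (hpos : ∀ x ∈ m, 0 < x) (h : 1 ≤ m.prod) : ∃ x ∈ m, 1 ≤ x := by
  by_contra! hlt
  have := Multiset.prod_map_lt_prod_map hm id (fun _ => 1) hpos hlt
  simp only [Multiset.map_const', Multiset.prod_replicate, one_pow, Multiset.map_id] at this
  linarith

theorem Multiset.two_mul_mul_sum_le (m : Multiset ℝ) (s : ℝ) :
    2 * s * m.sum ≤ (m.map (· ^ 2)).sum + card m * s ^ 2 := by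
  induction m using Multiset.induction_on with
  | empty => simp
  | cons x m ih =>
    simp only [Multiset.sum_cons, Multiset.map_cons, Multiset.card_cons]
    push_cast
    nlinarith [sq_nonneg (x - s)]

/-- Kober's upper bound for the gap between the arithmetic and the geometric mean, normalized to
geometric mean `1`. Replacing some `a ≤ 1` and `b ≥ 1` by their product `a b` lowers the number
of terms and keeps the product, which sets up an induction. -/
theorem Multiset.sq_sum_le_of_prod_eq_one (m : Multiset ℝ) (hpos : ∀ x ∈ m, 0 < x)
    (hprod : m.prod = 1) :
    m.sum ^ 2 ≤ (card m - 1) * (m.map (· ^ 2)).sum + card m := by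
  induction hk : card m using Nat.strong_induction_on generalizing m with
  | _ k ih =>
  rcases Nat.lt_or_ge k 2 with hk2 | hk2
  · interval_cases k
    · simp [Multiset.card_eq_zero.1 hk]
    · obtain ⟨x, rfl⟩ := Multiset.card_eq_one.1 hk
      simp_all
  obtain ⟨a, ha, ha1⟩ :=
    exists_le_one_of_prod_le_one (by rintro rfl; simp at hk; omega) hprod.le
  obtain ⟨m₁, rfl⟩ := Multiset.exists_cons_of_mem ha
  have ha0 : 0 < a := hpos a (Multiset.mem_cons_self a m₁)
  rw [Multiset.prod_cons] at hprod
  obtain ⟨b, hb, hb1⟩ := exists_one_le_of_one_le_prod (by rintro rfl; simp at hk; omega)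
    (fun x hx => hpos x (Multiset.mem_cons_of_mem hx)) (by nlinarith)
  obtain ⟨m₂, rfl⟩ := Multiset.exists_cons_of_mem hb
  have hb0 : 0 < b := hpos b (by simp)
  have hmerge := ih (k - 1) (by omega) ((a * b) ::ₘ m₂)
    (by
      intro x hx
      rcases Multiset.mem_cons.1 hx with rfl | hx
      · positivity
      · exact hpos x (by simp [hx]))
    (by rw [Multiset.prod_cons, ← hprod, Multiset.prod_cons, mul_assoc])
    (by simp at hk ⊢; omega)
  have hspread := two_mul_mul_sum_le m₂ (a + b - a * b)
  simp only [Multiset.card_cons, Multiset.sum_cons, Multiset.map_cons] at hk hmerge ⊢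
  subst hk
  push_cast at hmerge ⊢
  have hcross : 0 ≤ card m₂ * (a * b) * ((1 - a) * (b - 1)) := by
    have : 0 ≤ (1 - a) * (b - 1) := mul_nonneg (sub_nonneg.2 ha1) (sub_nonneg.2 hb1)
    positivity
  linear_combination hmerge + hspread + 2 * hcross + sq_nonneg (1 - a * b)

variable {ι κ : Type*}

theorem Finset.sq_sum_le_of_prod_eq_pow (s : Finset ι) {t : ι → ℝ} (ht : ∀ i ∈ s, 0 ≤ t i)
    {g : ℝ} (hg : 0 ≤ g) (hprod : ∏ i ∈ s, t i = g ^ #s) :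
    (∑ i ∈ s, t i) ^ 2 ≤ (#s - 1) * ∑ i ∈ s, t i ^ 2 + #s * g ^ 2 := by
  classical
  rcases hg.eq_or_lt with rfl | hg
  · rcases s.eq_empty_or_nonempty with rfl | hs
    · simp
    obtain ⟨i, hi, hti⟩ := Finset.prod_eq_zero_iff.1 (hprod.trans (zero_pow hs.card_ne_zero))
    have hcard : ((#(s.erase i) : ℕ) : ℝ) = #s - 1 := by
      rw [Finset.card_erase_of_mem hi, Nat.cast_sub (Finset.card_pos.2 hs), Nat.cast_one]
    have hs1 : (1 : ℝ) ≤ #s := mod_cast Finset.card_pos.2 hs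
    calc (∑ i ∈ s, t i) ^ 2 = (∑ j ∈ s.erase i, t j) ^ 2 := by rw [Finset.sum_erase _ hti]
      _ ≤ #(s.erase i) * ∑ j ∈ s.erase i, t j ^ 2 := sq_sum_le_card_mul_sum_sq
      _ ≤ (#s - 1) * ∑ i ∈ s, t i ^ 2 + #s * (0 : ℝ) ^ 2 := by
        rw [hcard, zero_pow two_ne_zero, mul_zero, add_zero]
        gcongr
        exact Finset.erase_subset i s
  have hnorm := (s.val.map (fun i => t i / g)).sq_sum_le_of_prod_eq_one
    (by
      have hne := (hprod.trans_ne (pow_pos hg #s).ne').symm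
      simp only [Multiset.mem_map, Finset.mem_val, forall_exists_index, and_imp]
      rintro _ i hi rfl
      exact div_pos ((ht i hi).lt_of_ne (Finset.prod_ne_zero_iff.1 hne.symm i hi).symm) hg)
    (by rw [← Finset.prod_eq_multiset_prod, Finset.prod_div_distrib, hprod, Finset.prod_const,
      div_self (by positivity)])
  simp only [Multiset.card_map, Finset.card_val, Multiset.map_map, ← Finset.sum_eq_multiset_sum,
    Function.comp_def, div_pow, ← Finset.sum_div] at hnorm
  rwa [div_le_iff₀ (by positivity), add_mul, mul_assoc, div_mul_cancel₀ _ (by positivity)]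
    at hnorm

theorem Finset.sum_mul_le_sum_mul_of_prod_pow_eq_pow (s : Finset ι) (w : ι → ℕ) {z : ι → ℝ}
    (hz : ∀ i ∈ s, 0 ≤ z i) {g : ℝ} (hg : 0 ≤ g)
    (hprod : ∏ i ∈ s, z i ^ w i = g ^ ∑ i ∈ s, w i) :
    (∑ i ∈ s, w i : ℝ) * g ≤ ∑ i ∈ s, w i * z i := by
  rcases (∑ i ∈ s, w i).eq_zero_or_pos with hw | hw
  · rw [← Nat.cast_sum, hw, Nat.cast_zero, zero_mul]
    exact Finset.sum_nonneg fun i hi => mul_nonneg (Nat.cast_nonneg _) (hz i hi)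
  have hmean := Real.geom_mean_le_arith_mean s (fun i => (w i : ℝ)) z
    (fun _ _ => Nat.cast_nonneg _) (by rw [← Nat.cast_sum]; exact_mod_cast hw) hz
  simp only [Real.rpow_natCast, hprod, ← Nat.cast_sum,
    Real.pow_rpow_inv_natCast hg hw.ne'] at hmean
  rw [le_div_iff₀ (by exact_mod_cast hw), mul_comm] at hmean
  exact_mod_cast hmean

theorem Finset.card_mul_le_sum_of_prod_eq_pow (s : Finset ι) {t : ι → ℝ}
    (ht : ∀ i ∈ s, 0 ≤ t i) {g : ℝ} (hg : 0 ≤ g) (hprod : ∏ i ∈ s, t i = g ^ #s) :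
    #s * g ≤ ∑ i ∈ s, t i := by
  simpa using s.sum_mul_le_sum_mul_of_prod_pow_eq_pow (fun _ => 1) ht hg (by simpa using hprod)

theorem Finset.sq_sum_le_of_mul_prod_eq_prod (s : Finset ι) (r : Finset κ) (hrs : #r + 1 = #s)
    {t : ι → ℝ} {c : κ → ℝ} {c₀ : ℝ} (ht : ∀ i ∈ s, 0 ≤ t i) (hc₀ : 0 ≤ c₀)
    (hprod : c₀ * ∏ j ∈ r, c j = ∏ i ∈ s, t i) :
    (#s + 1) * (∑ i ∈ s, t i) ^ 2
      ≤ 2 * c₀ * ∑ i ∈ s, t i + (#s * ∑ j ∈ r, c j ^ 2 + (#s ^ 2 - 1) * ∑ i ∈ s, t i ^ 2) := by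
  set g := (∏ i ∈ s, t i) ^ ((#s : ℝ)⁻¹)
  have hg : 0 ≤ g := Real.rpow_nonneg (Finset.prod_nonneg ht) _
  have hgs : ∏ i ∈ s, t i = g ^ #s :=
    (Real.rpow_inv_natCast_pow (Finset.prod_nonneg ht) (by omega)).symm
  have hkober := s.sq_sum_le_of_prod_eq_pow ht hg hgs
  have hamgm := s.card_mul_le_sum_of_prod_eq_pow ht hg hgs
  -- AM-GM for `c₀ g` (twice) and the `c j ^ 2`: their product is `(g ^ 2) ^ (#s + 1)`
  have hc₀g : (#s + 1) * g ^ 2 ≤ 2 * (c₀ * g) + ∑ j ∈ r, c j ^ 2 := by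
    have := r.insertNone.sum_mul_le_sum_mul_of_prod_pow_eq_pow (Option.elim · 2 fun _ => 1)
      (z := (Option.elim · (c₀ * g) (c · ^ 2)))
      (by
        simp only [Finset.forall_mem_insertNone, Option.elim_none, Option.elim_some]
        exact ⟨mul_nonneg hc₀ hg, fun j _ => sq_nonneg _⟩)
      (sq_nonneg g)
      (by
        simp only [Finset.prod_insertNone, Finset.sum_insertNone, Option.elim_none,
          Option.elim_some, pow_one, Finset.sum_const, smul_eq_mul, mul_one, Finset.prod_pow]
        rw [← mul_pow, mul_right_comm, hprod, hgs, ← hrs]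
        ring)
    simp only [Finset.sum_insertNone, Option.elim_none, Option.elim_some, Nat.cast_one,
      Nat.cast_ofNat, one_mul, Finset.sum_const, nsmul_eq_mul, mul_one] at this
    rw [← hrs]
    push_cast
    linear_combination this
  nlinarith [mul_le_mul_of_nonneg_left hamgm hc₀]

/-- `τ ↦ k τ² - 2 c τ` is convex and vanishes at `0`, so its bound by `R ≥ 0` at `T` extends to
`[0, T]`. -/
theorem mul_sq_le_of_mul_sq_le_of_le {k c τ T R : ℝ} (hT : k * T ^ 2 ≤ 2 * c * T + R)
    (hk : 0 ≤ k) (hR : 0 ≤ R) (hτ : 0 ≤ τ) (hτT : τ ≤ T) : k * τ ^ 2 ≤ 2 * c * τ + R := by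
  rcases le_total (k * T) (2 * c) with h | h <;> nlinarith [mul_le_mul_of_nonneg_left hτT hτ]

noncomputable def crossForm (n : ℕ) [NeZero n] (a b : Fin n → ℝ) : ℝ :=
  ∑ l, (if l = 0 then 1 else ((n : ℝ) - 1) ^ 2) * (a (l + 1) ^ 2 - a l ^ 2) * b l ^ 2
    + ((n : ℝ) - 1) * ((n : ℝ) ^ 2 - n - 1) * ∑ l, a l ^ 2 * b l ^ 2
    - n * ((n : ℝ) ^ 2 - n - 1) * (a 0 ^ 2 * b 0 ^ 2)

theorem crossForm_nonneg (K : ℕ) {a b : Fin (K + 2) → ℝ} (ha : ∀ i, 0 ≤ a i)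
    (hb : ∀ i, 0 ≤ b i) (horth : a 0 * b 0 ≤ ∑ i : Fin (K + 1), a i.succ * b i.succ) :
    0 ≤ crossForm (K + 2) a b := by
  set N : ℝ := K + 1 with hN
  have hN1 : 1 ≤ N := by simp [hN]
  have hprod : a 1 * b (Fin.last (K + 1)) * ∏ j : Fin K, a j.succ.succ * b j.castSucc.succ
      = ∏ i : Fin (K + 1), a i.succ * b i.succ := by
    simp only [Finset.prod_mul_distrib, Fin.prod_univ_succ (fun i => a i.succ),
      Fin.prod_univ_castSucc (fun i => b i.succ), Fin.succ_zero_eq_one, Fin.succ_last]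
    ring
  have hcyc : ∑ i : Fin (K + 1), a (i.succ + 1) ^ 2 * b i.succ ^ 2
      = ∑ j : Fin K, (a j.succ.succ * b j.castSucc.succ) ^ 2
        + (a 0 * b (Fin.last (K + 1))) ^ 2 := by
    simp only [Fin.sum_univ_castSucc (fun i => a (i.succ + 1) ^ 2 * b i.succ ^ 2),
      Fin.succ_castSucc, Fin.coeSucc_eq_succ, Fin.succ_last, Fin.last_add_one, mul_pow]
  have hform : crossForm (K + 2) a b = (a 1 * b 0) ^ 2
      + N ^ 2 * ∑ i : Fin (K + 1), a (i.succ + 1) ^ 2 * b i.succ ^ 2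
      + N * (N ^ 2 - 1) * ∑ i : Fin (K + 1), (a i.succ * b i.succ) ^ 2
      - N * (N + 1) * (a 0 * b 0) ^ 2 := by
    have hcoef : ((K + 2 : ℕ) : ℝ) = N + 1 := by push_cast; ring
    simp only [crossForm, Fin.sum_univ_succ (n := K + 1), if_pos, Fin.succ_ne_zero, if_false,
      zero_add, hcoef, mul_sub, sub_mul, Finset.sum_sub_distrib, mul_assoc, ← Finset.mul_sum,
      mul_pow]
    ring
  have hsum := Finset.sq_sum_le_of_mul_prod_eq_prod univ univ (by simp)
    (fun i _ => mul_nonneg (ha i.succ) (hb i.succ)) (mul_nonneg (ha 1) (hb _)) hprod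
  simp only [card_univ, Fintype.card_fin] at hsum
  push_cast at hsum
  rw [← hN] at hsum
  have hτ := mul_sq_le_of_mul_sq_le_of_le hsum (by linarith)
    (add_nonneg (by positivity) (mul_nonneg (by nlinarith) (by positivity)))
    (mul_nonneg (ha 0) (hb 0)) horth
  have hc₀ := two_mul_le_add_sq (a 1 * b 0) (N * (a 0 * b (Fin.last (K + 1))))
  rw [hform, hcyc]
  nlinarith [mul_le_mul_of_nonneg_left hτ (by linarith : 0 ≤ N)]

noncomputable def BmapCDiag (n : ℕ) [NeZero n] (X : Matrix (Fin n) (Fin n) ℂ) : Fin n → ℂ :=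
  fun l => (if l = 0 then 1 else ((n : ℝ) - 1) ^ 2) • (X (l + 1) (l + 1) - X l l)
    + (((n : ℝ) - 1) * ((n : ℝ) ^ 2 - n - 1)) • X l l
    - if l = 0 then (n * ((n : ℝ) ^ 2 - n - 1)) • X l l else 0

section

variable {n : ℕ} [NeZero n]

theorem BmapC_eq (X : Matrix (Fin n) (Fin n) ℂ) :
    BmapC n X = diagonal (BmapCDiag n X) - (((n : ℝ) - 1) * ((n : ℝ) ^ 2 - n - 1)) • X
      + (n * ((n : ℝ) ^ 2 - n - 1) / 2)
        • (diagonal (Pi.single 0 1) * X + X * diagonal (Pi.single 0 1)) := by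
  ext l m
  simp only [BmapC, BmapCDiag, of_apply, Matrix.add_apply, Matrix.sub_apply, Matrix.smul_apply,
    diagonal_apply, diagonal_mul, mul_diagonal, Pi.single_apply, Complex.real_smul]
  rcases eq_or_ne l m with rfl | hlm
  · by_cases hl : l = 0 <;> simp [hl]; ring
  · by_cases hl : l = 0 <;> by_cases hm : m = 0 <;> simp_all [eq_comm] <;> ring

theorem star_dotProduct_BmapC_mulVec {X : Matrix (Fin n) (Fin n) ℂ} {v : Fin n → ℂ}
    (hXv : X *ᵥ v = 0) (hvX : star v ᵥ* X = 0) :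
    star v ⬝ᵥ (BmapC n X *ᵥ v) = ∑ l, BmapCDiag n X l * (star (v l) * v l) := by
  have hX : star v ⬝ᵥ (X *ᵥ v) = 0 := by rw [hXv, dotProduct_zero]
  have hEX : star v ⬝ᵥ ((diagonal (Pi.single 0 1) * X) *ᵥ v) = 0 := by
    rw [← mulVec_mulVec, hXv, mulVec_zero, dotProduct_zero]
  have hXE : star v ⬝ᵥ ((X * diagonal (Pi.single 0 1)) *ᵥ v) = 0 := by
    rw [← mulVec_mulVec, dotProduct_mulVec, hvX, zero_dotProduct]
  rw [BmapC_eq, add_mulVec, sub_mulVec, smul_mulVec, smul_mulVec, add_mulVec, dotProduct_add,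
    dotProduct_sub, dotProduct_smul, dotProduct_smul, dotProduct_add, hEX, hXE, hX]
  simp [dotProduct, mulVec_diagonal, mul_left_comm]

theorem star_dotProduct_BmapC_vecMulVec {u v : Fin n → ℂ} (h : star v ⬝ᵥ u = 0) :
    star v ⬝ᵥ (BmapC n (vecMulVec u (star u)) *ᵥ v) = crossForm n (‖u ·‖) (‖v ·‖) := by
  rw [star_dotProduct_BmapC_mulVec (by simp [vecMulVec_mulVec, star_dotProduct u v, h])
    (by rw [vecMul_vecMulVec, h, zero_smul]), crossForm]
  simp only [BmapCDiag, vecMulVec_apply, Pi.star_apply, RCLike.star_def, Complex.mul_conj',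
    Complex.conj_mul', Complex.real_smul]
  push_cast
  simp [Finset.sum_add_distrib, Finset.sum_sub_distrib, Finset.mul_sum, sub_mul, add_mul,
    mul_assoc]

end

theorem norm_mul_norm_le_sum_of_star_dotProduct_eq_zero {𝕜 : Type*} [RCLike 𝕜] {K : ℕ}
    {u v : Fin (K + 1) → 𝕜} (h : star v ⬝ᵥ u = 0) :
    ‖u 0‖ * ‖v 0‖ ≤ ∑ i : Fin K, ‖u i.succ‖ * ‖v i.succ‖ := by
  rw [dotProduct, Fin.sum_univ_succ, add_eq_zero_iff_eq_neg] at h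
  simp only [Pi.star_apply] at h
  calc ‖u 0‖ * ‖v 0‖ = ‖star (v 0) * u 0‖ := by simp [mul_comm]
    _ ≤ ∑ i : Fin K, ‖star (v i.succ) * u i.succ‖ := by
      rw [h, norm_neg]
      exact norm_sum_le _ _
    _ = ∑ i : Fin K, ‖u i.succ‖ * ‖v i.succ‖ := by simp [mul_comm]

theorem BmapC_cross_positive_general (n : ℕ) [NeZero n] (u v : Fin n → ℂ)
    (horth : star v ⬝ᵥ u = 0) :
    0 ≤ star v ⬝ᵥ (BmapC n (vecMulVec u (star u)) *ᵥ v) := by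
  rw [star_dotProduct_BmapC_vecMulVec horth, Complex.zero_le_real]
  rcases n with _ | _ | K
  · exact absurd rfl (NeZero.ne 0)
  · simp [crossForm, mul_nonneg]
  · exact crossForm_nonneg K (fun _ => norm_nonneg _) (fun _ => norm_nonneg _)
      (norm_mul_norm_le_sum_of_star_dotProduct_eq_zero horth)

/-- **Cross-positivity of the exotic drift `B`, complex case.**
For `n ≥ 3` and all `u, v ∈ ℂⁿ` with `v* u = 0` one has `v* B(u u*) v ≥ 0`; consequently `B`
generates a one-parameter semigroup of linear maps preserving the cone of positive semidefinite
complex Hermitian matrices. -/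
theorem BmapC_cross_positive (n : ℕ) [NeZero n] (hn : 3 ≤ n) (u v : Fin n → ℂ)
    (horth : star v ⬝ᵥ u = 0) :
    0 ≤ star v ⬝ᵥ (BmapC n (vecMulVec u (star u)) *ᵥ v) :=
  BmapC_cross_positive_general n u v horth
end

section
/- Let n ≥ 3 and let u_1, …, u_n be nonzero real numbers, with the cyclic convention u_{n+1} = u_1. Then the (n−1)×(n−1) real matrix Y, indexed by l, m ∈ {2, …, n}, whose diagonal entries are Y_{ll} = u_2²/u_1² + n(n−1)(n−3) + (n−1)²·u_{l+1}²/u_l² and whose off-diagonal entries all equal u_2²/u_1² − n(n−1), is positive semidefinite. -/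
/-!
Write `m = n - 1`, `a = u₂²/u₁²` and `r_l = u_{l+3}²/u_{l+2}²`; the cyclic convention makes the
product telescope to `a ∏ r_l = 1`. With `s = ∑ x_l` and `q = ∑ x_l²`, the quadratic form of `Y` is
`a s² + m² ∑ r_l x_l² - m (m + 1) P` with `P = s² - (m - 1) q`. Only `P > 0` matters, and one may
take `x ≥ 0`: if `a < m (m + 1)`, passing from `x` to `|x|` can only decrease the form. AM-GM on
the `m + 1` numbers `a s²`, `m² r_l x_l²`, whose product is `m^{2m} s² (∏ x_l)²`, reduces the claim
to `(m P)^{m+1} ≤ m^{2m} s² (∏ x_l)²`. This follows from `m P ≤ s²` (Cauchy–Schwarz) and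
`P ≤ m G²`, `G` the geometric mean of the `x_l`; the latter is proved by induction, removing a
smallest entry, which is at most the geometric mean of the others.
-/

open Finset Matrix

theorem Finset.eq_prod_range_div₀ {G₀ : Type*} [CommGroupWithZero G₀] (f : ℕ → G₀) (n : ℕ)
    (hf : ∀ i < n, f i ≠ 0) : f n = f 0 * ∏ i ∈ range n, f (i + 1) / f i := by
  induction n with
  | zero => simp
  | succ k ih =>
    rw [prod_range_succ, ← mul_assoc, ← ih fun i hi => hf i (by omega),
      mul_div_cancel₀ _ (hf k (by omega))]

namespace Real

theorem sum_mul_le_sum_mul_of_pow_sum_le_prod_pow {ι : Type*} (s : Finset ι) (k : ι → ℕ)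
    {z : ι → ℝ} {y : ℝ} (hz : ∀ i ∈ s, 0 ≤ z i) (hy : 0 ≤ y) (hk : ∑ i ∈ s, k i ≠ 0)
    (h : y ^ (∑ i ∈ s, k i) ≤ ∏ i ∈ s, z i ^ k i) :
    (∑ i ∈ s, k i : ℕ) * y ≤ ∑ i ∈ s, k i * z i := by
  set K := ∑ i ∈ s, k i
  have hK : (0 : ℝ) < K := by positivity
  have amgm := geom_mean_le_arith_mean s (fun i => (k i : ℝ)) z (fun i _ => by positivity)
    (by rwa [← Nat.cast_sum]) hz
  simp only [rpow_natCast, ← Nat.cast_sum] at amgm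
  rw [le_div_iff₀ hK, mul_comm] at amgm
  calc (K : ℝ) * y = K * (y ^ K) ^ (K⁻¹ : ℝ) := by rw [pow_rpow_inv_natCast hy hk]
    _ ≤ K * (∏ i ∈ s, z i ^ k i) ^ (K⁻¹ : ℝ) := by gcongr
    _ ≤ ∑ i ∈ s, k i * z i := amgm

theorem two_mul_mul_le_of_pow_eq {N : ℕ} {t c g : ℝ} (ht : 0 ≤ t) (hc : 0 ≤ c)
    (h : g ^ (N + 2) = t * c ^ (N + 1)) :
    2 * (N + 1) * c * t ≤ N * t ^ 2 + (N + 2) * g ^ 2 := by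
  have := sum_mul_le_sum_mul_of_pow_sum_le_prod_pow univ (fun b : Bool => if b then N + 2 else N)
    (z := fun b => if b then g ^ 2 else t ^ 2) (y := c * t) (by simp [sq_nonneg])
    (by positivity) (by simp) (by
      simp only [Fintype.prod_bool, Fintype.sum_bool, if_true, Bool.false_eq_true, if_false]
      rw [← pow_mul, mul_comm 2, pow_mul, h]
      apply le_of_eq; ring)
  simp only [Fintype.sum_bool, if_true, Bool.false_eq_true, if_false] at this
  push_cast at this
  linarith

end Real

noncomputable def geomMean {ι : Type*} (s : Finset ι) (v : ι → ℝ) : ℝ :=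
  (∏ i ∈ s, v i) ^ ((#s : ℝ)⁻¹)

theorem geomMean_nonneg {ι : Type*} {s : Finset ι} {v : ι → ℝ} (hv : ∀ i ∈ s, 0 ≤ v i) :
    0 ≤ geomMean s v :=
  Real.rpow_nonneg (prod_nonneg hv) _

theorem geomMean_pow_card {ι : Type*} {s : Finset ι} {v : ι → ℝ} (hs : s.Nonempty)
    (hv : ∀ i ∈ s, 0 ≤ v i) : geomMean s v ^ #s = ∏ i ∈ s, v i :=
  Real.rpow_inv_natCast_pow (prod_nonneg hv) hs.card_ne_zero

theorem sq_sum_le_sub_one_mul_sum_sq_add_mul_geomMean_sq {ι : Type*} (s : Finset ι)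
    (hs : s.Nonempty) (v : ι → ℝ) (hv : ∀ i ∈ s, 0 ≤ v i) :
    (∑ i ∈ s, v i) ^ 2 ≤ (#s - 1) * ∑ i ∈ s, v i ^ 2 + #s * geomMean s v ^ 2 := by
  classical
  induction s using Finset.induction_on_min_value v with
  | empty => simp at hs
  | insert a s ha hmin ih =>
    rcases s.eq_empty_or_nonempty with rfl | hs'
    · simp [geomMean]
    have hv' : ∀ i ∈ s, 0 ≤ v i := fun i hi => hv i (mem_insert_of_mem hi)
    have ht : 0 ≤ v a := hv a (mem_insert_self a s)
    obtain ⟨N, hN⟩ : ∃ N, #s = N + 1 := Nat.exists_eq_add_one.mpr hs'.card_pos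
    set t := v a
    set g := geomMean s v
    have hg : 0 ≤ g := geomMean_nonneg hv'
    have hgN : g ^ (N + 1) = ∏ i ∈ s, v i := hN ▸ geomMean_pow_card hs' hv'
    have hAM : (N + 1) * g ≤ ∑ i ∈ s, v i := by
      have := Real.sum_mul_le_sum_mul_of_pow_sum_le_prod_pow s (fun _ => 1) hv' hg
        (by simp [hN]) (by simp [hN, hgN])
      simpa [hN] using this
    have htg : t ≤ g := by
      refine le_of_pow_le_pow_left₀ (by omega : N + 1 ≠ 0) hg ?_
      rw [hgN, ← hN, ← prod_const]
      exact prod_le_prod (fun _ _ => ht) hmin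
    have hCS : (∑ i ∈ s, v i) ^ 2 ≤ (N + 1) * ∑ i ∈ s, v i ^ 2 := by
      have := sq_sum_le_card_mul_sum_sq (s := s) (f := v)
      rwa [hN, Nat.cast_succ] at this
    have hnew : 2 * (N + 1) * g * t ≤ N * t ^ 2 + (N + 2) * geomMean (insert a s) v ^ 2 := by
      refine Real.two_mul_mul_le_of_pow_eq ht hg ?_
      rw [hgN, ← prod_insert ha, show N + 2 = #(insert a s) by rw [card_insert_of_notMem ha, hN]]
      exact geomMean_pow_card (insert_nonempty a s) hv
    have ih := ih hs' hv'
    rw [hN] at ih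
    rw [sum_insert ha, sum_insert ha, card_insert_of_notMem ha, hN]
    push_cast at ih ⊢
    -- together with `hCS`, this product bounds the cross term `2 t ∑ v` against `∑ v²`
    nlinarith [mul_nonneg (sub_nonneg.2 hAM)
      (show 0 ≤ ∑ i ∈ s, v i + (N + 1) * g - 2 * (N + 1) * t by nlinarith)]

theorem card_mul_sq_sum_sub_pow_le {ι : Type*} [Fintype ι] [Nonempty ι] {x : ι → ℝ}
    (hx : ∀ i, 0 ≤ x i) (hP : 0 ≤ (∑ i, x i) ^ 2 - (Fintype.card ι - 1) * ∑ i, x i ^ 2) :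
    (Fintype.card ι * ((∑ i, x i) ^ 2 - (Fintype.card ι - 1) * ∑ i, x i ^ 2)) ^ (Fintype.card ι + 1)
      ≤ ((Fintype.card ι : ℝ) ^ Fintype.card ι) ^ 2 * (∏ i, x i) ^ 2 * (∑ i, x i) ^ 2 := by
  obtain ⟨m, hm⟩ : ∃ m, Fintype.card ι = m := ⟨_, rfl⟩
  rw [hm] at hP ⊢
  set P := (∑ i, x i) ^ 2 - (m - 1) * ∑ i, x i ^ 2
  have hgm : geomMean univ x ^ m = ∏ i, x i := hm ▸ geomMean_pow_card univ_nonempty fun i _ => hx i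
  have hPg : P ≤ m * geomMean univ x ^ 2 := by
    have := sq_sum_le_sub_one_mul_sum_sq_add_mul_geomMean_sq univ univ_nonempty x fun i _ => hx i
    rw [card_univ, hm] at this
    linarith
  have hPm : P ^ m ≤ (m : ℝ) ^ m * (∏ i, x i) ^ 2 := by
    calc P ^ m ≤ (m * geomMean univ x ^ 2) ^ m := pow_le_pow_left₀ hP hPg m
      _ = (m : ℝ) ^ m * (∏ i, x i) ^ 2 := by rw [mul_pow, ← pow_mul, mul_comm 2, pow_mul, hgm]
  have hmP : (m : ℝ) * P ≤ (∑ i, x i) ^ 2 := by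
    have hCS : (∑ i, x i) ^ 2 ≤ m * ∑ i, x i ^ 2 := hm ▸ sq_sum_le_card_mul_sum_sq
    have hm1 : (1 : ℝ) ≤ m := by exact_mod_cast hm ▸ Fintype.card_pos
    nlinarith
  calc ((m : ℝ) * P) ^ (m + 1) = (m ^ m * P ^ m) * (m * P) := by rw [pow_succ, mul_pow]
    _ ≤ (m ^ m * (m ^ m * (∏ i, x i) ^ 2)) * (∑ i, x i) ^ 2 := by gcongr
    _ = ((m : ℝ) ^ m) ^ 2 * (∏ i, x i) ^ 2 * (∑ i, x i) ^ 2 := by ring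

theorem card_mul_sq_sum_sub_le_of_nonneg {ι : Type*} [Fintype ι] [Nonempty ι]
    {a : ℝ} {r x : ι → ℝ} (ha : 0 ≤ a) (hr : ∀ i, 0 ≤ r i) (hra : a * ∏ i, r i = 1)
    (hx : ∀ i, 0 ≤ x i) :
    (Fintype.card ι + 1) * Fintype.card ι * ((∑ i, x i) ^ 2 - (Fintype.card ι - 1) * ∑ i, x i ^ 2)
      ≤ a * (∑ i, x i) ^ 2 + (Fintype.card ι) ^ 2 * ∑ i, r i * x i ^ 2 := by
  rcases le_or_gt ((∑ i, x i) ^ 2 - (Fintype.card ι - 1) * ∑ i, x i ^ 2) 0 with hP | hP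
  · have := sum_nonneg fun i (_ : i ∈ univ) => mul_nonneg (hr i) (sq_nonneg (x i))
    exact (mul_nonpos_of_nonneg_of_nonpos (by positivity) hP).trans (by positivity)
  have hpow := card_mul_sq_sum_sub_pow_le hx hP.le
  obtain ⟨m, hm⟩ : ∃ m, Fintype.card ι = m := ⟨_, rfl⟩
  rw [hm] at hP hpow ⊢
  set P := (∑ i, x i) ^ 2 - (m - 1) * ∑ i, x i ^ 2
  let z : Option ι → ℝ := fun o => o.elim (a * (∑ i, x i) ^ 2) fun i => m ^ 2 * (r i * x i ^ 2)
  have hz : ∀ o ∈ univ, 0 ≤ z o := by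
    rintro (_ | i) _
    · exact mul_nonneg ha (sq_nonneg _)
    · exact mul_nonneg (sq_nonneg _) (mul_nonneg (hr i) (sq_nonneg _))
  have hzprod : ∏ o, z o ^ 1 = ((m : ℝ) ^ m) ^ 2 * (∏ i, x i) ^ 2 * (∑ i, x i) ^ 2 := by
    simp only [pow_one, Fintype.prod_option, z, Option.elim, prod_mul_distrib, prod_const,
      card_univ, hm, prod_pow]
    linear_combination ((m : ℝ) ^ m) ^ 2 * (∏ i, x i) ^ 2 * (∑ i, x i) ^ 2 * hra
  have hcard : ∑ _o : Option ι, 1 = m + 1 := by simp [hm]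
  have := Real.sum_mul_le_sum_mul_of_pow_sum_le_prod_pow univ (fun _ => 1) (y := m * P) hz
    (by positivity) (by simp) (by rwa [hzprod, hcard])
  simp only [hcard, Nat.cast_one, one_mul, Fintype.sum_option, z, Option.elim, ← mul_sum] at this
  push_cast at this
  linarith

theorem card_mul_sq_sum_sub_le {ι : Type*} [Fintype ι] [Nonempty ι]
    {a : ℝ} {r : ι → ℝ} (ha : 0 ≤ a) (hr : ∀ i, 0 ≤ r i) (hra : a * ∏ i, r i = 1)
    (x : ι → ℝ) :
    (Fintype.card ι + 1) * Fintype.card ι * ((∑ i, x i) ^ 2 - (Fintype.card ι - 1) * ∑ i, x i ^ 2)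
      ≤ a * (∑ i, x i) ^ 2 + (Fintype.card ι) ^ 2 * ∑ i, r i * x i ^ 2 := by
  have hm : (1 : ℝ) ≤ Fintype.card ι := by exact_mod_cast Fintype.card_pos
  have hq : 0 ≤ ∑ i, x i ^ 2 := sum_nonneg fun i _ => sq_nonneg (x i)
  have hR : 0 ≤ ∑ i, r i * x i ^ 2 := sum_nonneg fun i _ => mul_nonneg (hr i) (sq_nonneg (x i))
  rcases le_or_gt ((Fintype.card ι + 1) * Fintype.card ι : ℝ) a with hbig | hsmall
  · nlinarith [mul_nonneg (sub_nonneg.2 hbig) (sq_nonneg (∑ i, x i)),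
      mul_nonneg (mul_nonneg (by positivity : (0 : ℝ) ≤ (Fintype.card ι + 1) * Fintype.card ι)
        (sub_nonneg.2 hm)) hq]
  -- the coefficient of `(∑ i, x i) ^ 2` is now negative, so replacing `x` by `|x|` only hurts
  have habs := card_mul_sq_sum_sub_le_of_nonneg ha hr hra fun i => abs_nonneg (x i)
  simp only [sq_abs] at habs
  have hsum : (∑ i, x i) ^ 2 ≤ (∑ i, |x i|) ^ 2 :=
    sq_le_sq' (by linarith [neg_abs_le (∑ i, x i), abs_sum_le_sum_abs x univ])
      ((le_abs_self _).trans (abs_sum_le_sum_abs x univ))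
  nlinarith [mul_le_mul_of_nonneg_left hsum (sub_nonneg.2 hsmall.le)]

theorem Matrix.dotProduct_mulVec_ite_eq {ι R : Type*} [Fintype ι] [DecidableEq ι] [CommRing R]
    (d : ι → R) (c : R) (x : ι → R) :
    x ⬝ᵥ (of (fun i j => if i = j then d i else c) *ᵥ x)
      = ∑ i, (d i - c) * x i ^ 2 + c * (∑ i, x i) ^ 2 := by
  have hsplit : of (fun i j => if i = j then d i else c)
      = diagonal (fun i => d i - c) + of fun _ _ => c := by
    ext i j
    by_cases hij : i = j <;> simp [hij, diagonal_apply_ne]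
  rw [hsplit, add_mulVec, dotProduct_add]
  simp only [dotProduct, mulVec_diagonal]
  simp only [mulVec, dotProduct, of_apply, ← mul_sum, sq]
  rw [← sum_mul]
  congr 1
  · exact sum_congr rfl fun i _ => by ring
  · ring

theorem Matrix.posSemidef_ite_eq {ι : Type*} [Fintype ι] [DecidableEq ι] (d : ι → ℝ) (c : ℝ)
    (h : ∀ x : ι → ℝ, 0 ≤ ∑ i, (d i - c) * x i ^ 2 + c * (∑ i, x i) ^ 2) :
    (of fun i j => if i = j then d i else c).PosSemidef := by
  refine PosSemidef.of_dotProduct_mulVec_nonneg ?_ fun x => ?_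
  · ext i j
    by_cases hij : i = j
    · simp [hij]
    · simp [hij, Ne.symm hij]
  · simpa [dotProduct_mulVec_ite_eq] using h x

/-- **Positive semidefiniteness of the auxiliary matrix `Y`.**
Let `n ≥ 3` and let `u 1, …, u n` be nonzero reals with the cyclic convention `u (n+1) = u 1`.
Then the `(n-1) × (n-1)` real matrix (indexed here by `Fin (n-1)`, where the index `l`
corresponds to the paper's index `l + 2 ∈ {2, …, n}`) with diagonal entries
`u 2 ^ 2 / u 1 ^ 2 + n (n-1) (n-3) + (n-1)² * u (l+3) ^ 2 / u (l+2) ^ 2` and all off-diagonal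
entries equal to `u 2 ^ 2 / u 1 ^ 2 - n (n-1)` is positive semidefinite. -/
theorem auxiliary_matrix_posSemidef (n : ℕ) (hn : 3 ≤ n) (u : ℕ → ℝ)
    (hu : ∀ l, 1 ≤ l → l ≤ n → u l ≠ 0) (hcyc : u (n + 1) = u 1) :
    (Matrix.of fun l m : Fin (n - 1) =>
      if l = m then
        u 2 ^ 2 / u 1 ^ 2 + (n : ℝ) * ((n : ℝ) - 1) * ((n : ℝ) - 3) +
          ((n : ℝ) - 1) ^ 2 * (u (l.1 + 3)) ^ 2 / (u (l.1 + 2)) ^ 2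
      else
        u 2 ^ 2 / u 1 ^ 2 - (n : ℝ) * ((n : ℝ) - 1)).PosSemidef := by
  set a := u 2 ^ 2 / u 1 ^ 2
  set r : Fin (n - 1) → ℝ := fun l => u (l.1 + 3) ^ 2 / u (l.1 + 2) ^ 2
  have hra : a * ∏ l, r l = 1 := by
    have htel := eq_prod_range_div₀ (fun i => u (i + 2) ^ 2) (n - 1)
      fun i hi => pow_ne_zero 2 (hu (i + 2) (by omega) (by omega))
    simp only [show n - 1 + 2 = n + 1 by omega, hcyc, zero_add, add_assoc, Nat.reduceAdd] at htel
    rw [Fin.prod_univ_eq_prod_range (fun l => u (l + 3) ^ 2 / u (l + 2) ^ 2), div_mul_eq_mul_div,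
      ← htel]
    exact div_self (pow_ne_zero 2 (hu 1 le_rfl (by omega)))
  have : Nonempty (Fin (n - 1)) := ⟨⟨0, by omega⟩⟩
  have hkey := card_mul_sq_sum_sub_le (by positivity) (fun l => by positivity) hra
  rw [Fintype.card_fin, Nat.cast_sub (by omega), Nat.cast_one] at hkey
  refine posSemidef_ite_eq _ _ fun x => ?_
  have hdiag : ∑ i, ((a + n * (n - 1) * (n - 3) + (n - 1) ^ 2 * u (i.1 + 3) ^ 2 / u (i.1 + 2) ^ 2)
      - (a - n * (n - 1))) * x i ^ 2
      = n * (n - 1) * (n - 2) * ∑ i, x i ^ 2 + (n - 1) ^ 2 * ∑ i, r i * x i ^ 2 := by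
    rw [mul_sum, mul_sum, ← sum_add_distrib]
    exact sum_congr rfl fun i _ => by ring
  rw [hdiag]
  linarith [hkey x]
end

section
/- Let n ≥ 3 and let B be the real-linear map on Hermitian n×n complex matrices defined in the context. Then there do not exist a matrix H ∈ M_n(ℂ) and a real-linear map B' on Hermitian n×n complex matrices with B'(X) positive semidefinite for every positive semidefinite X, such that B(X) = H X + X H* + B'(X) for every Hermitian X. (Equivalently, B is not the sum of an endomorphism of the PSD cone and an element of the Lie algebra of its automorphism group.) -/
open Matrix
open scoped ComplexOrder

/-!
Suppose `B X = H X + X Hᴴ + B' X` with `B'` positive, and let `h = Re (diag H)`. Testing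
`B' (v vᵀ) ⪰ 0` against `w`, for real vectors `v` and `w`, and averaging over the simultaneous sign
changes of `v` and `w` (which `B` commutes with) removes the off-diagonal entries of `H`:
`2 ⟨h, v w⟩ ⟨1, v w⟩ ≤ wᵀ B(v vᵀ) w`. The right-hand side depends only on `z = v w` and on the
ratios `v (l + 1) / v l`. With `v` constant this is a quadratic inequality in `z`; with `v`
geometric of ratio `K → 0` along the cycle `l ↦ l + 1`, cut at a vertex `k` where `z k = 0`, it is
another one. Both are equalities at `t = 0` on the test vectors `z = ((n - 1)(1 - t), -1, …, -1)`
and `z = ((n - 2)(1 + t), -1, …, 0, …, -1)` (the `0` at `k`); a positive combination of them,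
summed over `k` and divided by `t`, reads `(n - 1)² (n - 2) (2 + t + 4 t h₀) ≤ 0`, which fails for
small `t > 0`.
-/

section SignAveraging

variable {ι : Type*} [Fintype ι] [DecidableEq ι]

def boolSign (b : Bool) : ℝ := if b then 1 else -1

lemma boolSign_mul_self (b : Bool) : boolSign b * boolSign b = 1 := by
  cases b <;> norm_num [boolSign]

lemma boolSign_not (b : Bool) : boolSign (!b) = -boolSign b := by
  cases b <;> simp [boolSign]

lemma sum_boolSign_mul_boolSign_of_ne {i j : ι} (hij : i ≠ j) :
    ∑ ε : ι → Bool, boolSign (ε i) * boolSign (ε j) = 0 := by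
  let flip : Equiv.Perm (ι → Bool) :=
    Function.Involutive.toPerm (fun ε => Function.update ε i !(ε i)) fun ε => by simp
  have hflip : ∀ ε, boolSign (flip ε i) * boolSign (flip ε j) =
      -(boolSign (ε i) * boolSign (ε j)) := by
    intro ε
    have hi : flip ε i = !(ε i) := Function.update_self _ _ _
    have hj : flip ε j = ε j := Function.update_of_ne hij.symm _ _
    rw [hi, hj, boolSign_not, neg_mul]
  have h := Equiv.sum_comp flip fun ε => boolSign (ε i) * boolSign (ε j)
  simp only [hflip, Finset.sum_neg_distrib] at h
  linarith

lemma sum_boolSign_mul_boolSign_mul (x : ι → ι → ℝ) :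
    ∑ ε : ι → Bool, ∑ i, ∑ j, boolSign (ε i) * boolSign (ε j) * x i j =
      2 ^ Fintype.card ι * ∑ i, x i i := by
  have hsum : ∀ i j : ι, ∑ ε : ι → Bool, boolSign (ε i) * boolSign (ε j) =
      if i = j then 2 ^ Fintype.card ι else 0 := by
    intro i j
    split_ifs with hij
    · subst hij
      simp [boolSign_mul_self]
    · exact sum_boolSign_mul_boolSign_of_ne hij
  rw [Finset.sum_comm]
  simp_rw [Finset.sum_comm (γ := ι → Bool), ← Finset.sum_mul, hsum, ite_mul, zero_mul,
    Finset.sum_ite_eq, Finset.mem_univ, if_true, Finset.mul_sum]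

end SignAveraging

section RealQuadForm

variable {ι : Type*}

def realRankOne (v : ι → ℝ) : Matrix ι ι ℂ := vecMulVec (fun i => (v i : ℂ)) fun i => (v i : ℂ)

lemma realRankOne_apply (v : ι → ℝ) (i j : ι) : realRankOne v i j = ((v i * v j : ℝ) : ℂ) := by
  rw [realRankOne, vecMulVec_apply, Complex.ofReal_mul]

variable [Fintype ι]

lemma realRankOne_posSemidef (v : ι → ℝ) : (realRankOne v).PosSemidef := by
  have h : star (fun i => (v i : ℂ)) = fun i => (v i : ℂ) :=
    funext fun i => Complex.conj_ofReal (v i)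
  have hpsd := posSemidef_vecMulVec_self_star fun i => (v i : ℂ)
  rwa [h] at hpsd

def realQuadForm (M : Matrix ι ι ℂ) (w : ι → ℝ) : ℝ := ∑ i, ∑ j, w i * w j * (M i j).re

lemma realQuadForm_add (M N : Matrix ι ι ℂ) (w : ι → ℝ) :
    realQuadForm (M + N) w = realQuadForm M w + realQuadForm N w := by
  simp only [realQuadForm, Matrix.add_apply, Complex.add_re, mul_add, Finset.sum_add_distrib]

lemma realQuadForm_sub (M N : Matrix ι ι ℂ) (w : ι → ℝ) :
    realQuadForm (M - N) w = realQuadForm M w - realQuadForm N w := by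
  simp only [realQuadForm, Matrix.sub_apply, Complex.sub_re, mul_sub, Finset.sum_sub_distrib]

lemma Matrix.PosSemidef.realQuadForm_nonneg {M : Matrix ι ι ℂ} (hM : M.PosSemidef)
    (w : ι → ℝ) : 0 ≤ realQuadForm M w := by
  have h := (Complex.le_def.1 (hM.dotProduct_mulVec_nonneg fun i => (w i : ℂ))).1
  rw [Complex.zero_re] at h
  refine h.trans_eq ?_
  simp only [realQuadForm, dotProduct, mulVec, Pi.star_apply, Complex.star_def,
    Complex.conj_ofReal, Finset.mul_sum, Complex.re_sum, Complex.mul_re, Complex.ofReal_re,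
    Complex.ofReal_im]
  refine Finset.sum_congr rfl fun i _ => Finset.sum_congr rfl fun j _ => ?_
  ring

lemma realQuadForm_mul_realRankOne (H : Matrix ι ι ℂ) (v w : ι → ℝ) :
    realQuadForm (H * realRankOne v) w =
      (∑ i, w i * ∑ a, (H i a).re * v a) * ∑ j, v j * w j := by
  rw [realQuadForm, Finset.sum_mul_sum]
  refine Finset.sum_congr rfl fun i _ => Finset.sum_congr rfl fun j _ => ?_
  simp only [realRankOne_apply, mul_apply, Complex.re_sum, Complex.re_mul_ofReal,
    Finset.mul_sum, Finset.sum_mul]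
  refine Finset.sum_congr rfl fun a _ => ?_
  ring

lemma realQuadForm_realRankOne_mul_conjTranspose (H : Matrix ι ι ℂ) (v w : ι → ℝ) :
    realQuadForm (realRankOne v * Hᴴ) w =
      (∑ i, w i * ∑ a, (H i a).re * v a) * ∑ j, v j * w j := by
  rw [realQuadForm, Finset.sum_mul_sum, Finset.sum_comm]
  refine Finset.sum_congr rfl fun j _ => Finset.sum_congr rfl fun i _ => ?_
  simp only [realRankOne_apply, mul_apply, conjTranspose_apply, Complex.re_sum,
    Complex.re_ofReal_mul, Complex.star_def, Complex.conj_re, Finset.mul_sum, Finset.sum_mul]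
  refine Finset.sum_congr rfl fun a _ => ?_
  ring

end RealQuadForm

lemma exists_pos_add_one_eq_mul_of_ne {n : ℕ} [NeZero n] (k : Fin n) {K : ℝ} (hK : 0 < K) :
    ∃ v : Fin n → ℝ, (∀ l, 0 < v l) ∧ ∀ l, l ≠ k → v (l + 1) = K * v l := by
  refine ⟨fun l => K ^ ((l - (k + 1) : Fin n) : ℕ), fun l => by positivity, fun l hl => ?_⟩
  suffices h : ((l + 1 - (k + 1) : Fin n) : ℕ) = ((l - (k + 1) : Fin n) : ℕ) + 1 by
    simp only [h, pow_succ, mul_comm]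
  rw [show l + 1 - (k + 1) = (l - (k + 1)) + 1 by abel]
  apply Fin.val_add_one_of_lt'
  by_contra hge
  apply hl
  have hx : (l - (k + 1)) + 1 = 0 := by
    ext
    rw [Fin.val_add, Fin.val_zero, Fin.val_one']
    have hxn : (l - (k + 1) : Fin n).val + 1 = n := by omega
    rcases Nat.lt_or_ge 1 n with h1 | h1
    · rw [Nat.mod_eq_of_lt h1, hxn, Nat.mod_self]
    · obtain rfl : n = 1 := by omega
      exact Nat.mod_one _
  rw [show l - (k + 1) + 1 = l - k by abel] at hx
  exact sub_eq_zero.1 hx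

lemma le_of_forall_pos_le_sq_mul_add {a b c : ℝ} (h : ∀ K : ℝ, 0 < K → a ≤ K ^ 2 * b + c) :
    a ≤ c := by
  have hlim : Filter.Tendsto (fun K : ℝ => K ^ 2 * b + c) (nhdsWithin 0 (Set.Ioi 0)) (nhds c) := by
    have hcont : Continuous fun K : ℝ => K ^ 2 * b + c := by fun_prop
    simpa using (hcont.tendsto 0).mono_left nhdsWithin_le_nhds
  exact ge_of_tendsto hlim (eventually_nhdsWithin_of_forall fun K hK => h K hK)

namespace BmapC

variable {n : ℕ} [NeZero n]

noncomputable def p (n : ℕ) : ℝ := ((n : ℝ) - 2) * ((n : ℝ) ^ 2 - n - 1) / 2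

noncomputable def q (n : ℕ) : ℝ := ((n : ℝ) - 1) * ((n : ℝ) ^ 2 - n - 1)

noncomputable def diagCoeff (n : ℕ) [NeZero n] (l : Fin n) : ℝ :=
  if l = 0 then 1 else ((n : ℝ) - 1) ^ 2

noncomputable def offDiagCoeff (n : ℕ) [NeZero n] (l m : Fin n) : ℝ :=
  if l = m then 0 else if l = 0 ∨ m = 0 then p n else q n

noncomputable def offDiagForm (n : ℕ) [NeZero n] (z : Fin n → ℝ) : ℝ :=
  ∑ i, ∑ j, offDiagCoeff n i j * (z i * z j)

lemma re_BmapC_realRankOne_apply (v : Fin n → ℝ) (i j : Fin n) :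
    (BmapC n (realRankOne v) i j).re = if i = j then diagCoeff n i * (v (i + 1) ^ 2 - v i ^ 2)
      else -(offDiagCoeff n i j * (v i * v j)) := by
  simp only [BmapC, of_apply, realRankOne_apply, ← Complex.ofReal_sub, diagCoeff, offDiagCoeff]
  split_ifs <;> simp only [Complex.smul_re, Complex.ofReal_re, smul_eq_mul, p, q] <;> ring

lemma realQuadForm_BmapC_realRankOne (v w : Fin n → ℝ) :
    realQuadForm (BmapC n (realRankOne v)) w =
      ∑ i, diagCoeff n i * (v (i + 1) ^ 2 - v i ^ 2) * w i ^ 2 - offDiagForm n (v * w) := by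
  have h : ∀ i j, w i * w j * (BmapC n (realRankOne v) i j).re =
      (if i = j then diagCoeff n i * (v (i + 1) ^ 2 - v i ^ 2) * w i ^ 2 else 0) -
        offDiagCoeff n i j * ((v * w) i * (v * w) j) := by
    intro i j
    rw [re_BmapC_realRankOne_apply]
    split_ifs with hij
    · subst hij
      rw [offDiagCoeff, if_pos rfl]
      ring
    · simp only [Pi.mul_apply]
      ring
  simp only [realQuadForm, offDiagForm, h, Finset.sum_sub_distrib, Finset.sum_ite_eq,
    Finset.mem_univ, if_true]

lemma realQuadForm_BmapC_realRankOne_mul_sign {d : Fin n → ℝ} (hd : ∀ i, d i * d i = 1)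
    (v w : Fin n → ℝ) :
    realQuadForm (BmapC n (realRankOne (d * v))) (d * w) =
      realQuadForm (BmapC n (realRankOne v)) w := by
  have hsq : ∀ (u : Fin n → ℝ) i, (d * u) i ^ 2 = u i ^ 2 := fun u i => by
    simp only [Pi.mul_apply]
    linear_combination u i ^ 2 * hd i
  have hvw : (d * v) * (d * w) = v * w := by
    ext i
    simp only [Pi.mul_apply]
    linear_combination v i * w i * hd i
  simp only [realQuadForm_BmapC_realRankOne, hsq, hvw]

/-- The quadratic form of `BmapC n (v vᵀ)` at `w` dominates that of `D (v vᵀ) + (v vᵀ) D`,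
`D = diagonal h`, for all real `v` and `w`. -/
def RankOneBound (n : ℕ) [NeZero n] (h : Fin n → ℝ) : Prop :=
  ∀ v w : Fin n → ℝ,
    2 * (∑ i, h i * (v i * w i)) * ∑ i, v i * w i ≤ realQuadForm (BmapC n (realRankOne v)) w

lemma rankOneBound_of_decomposition (H : Matrix (Fin n) (Fin n) ℂ)
    (B' : Matrix (Fin n) (Fin n) ℂ →ₗ[ℝ] Matrix (Fin n) (Fin n) ℂ)
    (hpos : ∀ X : Matrix (Fin n) (Fin n) ℂ, X.PosSemidef → (B' X).PosSemidef)
    (hdec : ∀ X : Matrix (Fin n) (Fin n) ℂ, X.IsHermitian → BmapC n X = H * X + X * Hᴴ + B' X) :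
    RankOneBound n fun i => (H i i).re := by
  intro v w
  set F := realQuadForm (BmapC n (realRankOne v)) w
  have hsign : ∀ ε : Fin n → Bool,
      2 * (∑ i, ∑ a, boolSign (ε i) * boolSign (ε a) * (w i * (H i a).re * v a)) *
        ∑ i, v i * w i ≤ F := by
    intro ε
    set d : Fin n → ℝ := fun i => boolSign (ε i)
    have hd : ∀ i, d i * d i = 1 := fun i => boolSign_mul_self _
    set X := realRankOne (d * v)
    have h := (hpos X (realRankOne_posSemidef _)).realQuadForm_nonneg (d * w)
    rw [eq_sub_of_add_eq' (hdec X (realRankOne_posSemidef _).isHermitian).symm, realQuadForm_sub,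
      realQuadForm_BmapC_realRankOne_mul_sign hd, realQuadForm_add, realQuadForm_mul_realRankOne,
      realQuadForm_realRankOne_mul_conjTranspose] at h
    have hs : ∑ j, (d * v) j * (d * w) j = ∑ j, v j * w j :=
      Finset.sum_congr rfl fun j _ => by
        simp only [Pi.mul_apply]
        linear_combination v j * w j * hd j
    have hA : ∑ i, (d * w) i * ∑ a, (H i a).re * (d * v) a =
        ∑ i, ∑ a, d i * d a * (w i * (H i a).re * v a) := by
      refine Finset.sum_congr rfl fun i _ => ?_
      rw [Finset.mul_sum]
      refine Finset.sum_congr rfl fun a _ => ?_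
      simp only [Pi.mul_apply]
      ring
    rw [hs, hA] at h
    linarith
  have hsum := Finset.sum_le_sum fun ε (_ : ε ∈ Finset.univ) => hsign ε
  rw [← Finset.sum_mul, ← Finset.mul_sum, sum_boolSign_mul_boolSign_mul, Finset.sum_const,
    Finset.card_univ, Fintype.card_fun, Fintype.card_bool, Fintype.card_fin, nsmul_eq_mul] at hsum
  have hdiag : ∑ i, (H i i).re * (v i * w i) = ∑ i, w i * (H i i).re * v i :=
    Finset.sum_congr rfl fun i _ => by ring
  rw [hdiag]
  push_cast at hsum
  exact le_of_mul_le_mul_left (by linarith) (by positivity : (0 : ℝ) < 2 ^ n)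

lemma offDiagForm_eq (z : Fin n → ℝ) :
    offDiagForm n z = q n * ((∑ i, z i) ^ 2 - ∑ i, z i ^ 2) +
      (p n - q n) * (2 * z 0 * ∑ i, z i - 2 * z 0 ^ 2) := by
  obtain ⟨m, rfl⟩ : ∃ m, n = m + 1 := ⟨n - 1, by have := NeZero.pos n; omega⟩
  have hrow : ∀ i : Fin m, ∑ j : Fin m, (if i = j then 0 else q (m + 1)) * (z i.succ * z j.succ) =
      q (m + 1) * z i.succ * ∑ j : Fin m, z j.succ - q (m + 1) * z i.succ ^ 2 := by
    intro i
    have h : ∀ j : Fin m, (if i = j then 0 else q (m + 1)) * (z i.succ * z j.succ) =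
        q (m + 1) * z i.succ * z j.succ - if i = j then q (m + 1) * z i.succ ^ 2 else 0 := by
      intro j
      split_ifs with hij
      · subst hij
        ring
      · ring
    simp only [h, Finset.sum_sub_distrib, ← Finset.mul_sum, Finset.sum_ite_eq, Finset.mem_univ,
      if_true]
  simp only [offDiagForm, offDiagCoeff, Fin.sum_univ_succ, Fin.succ_ne_zero,
    (Fin.succ_ne_zero _).symm, Fin.succ_inj, if_true, if_false, or_false, false_or]
  simp only [hrow, Finset.sum_sub_distrib, ← Finset.mul_sum, ← Finset.sum_mul,
    Finset.sum_add_distrib]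
  ring

lemma sum_diagCoeff : ∑ l, diagCoeff n l = 1 + ((n : ℝ) - 1) * ((n : ℝ) - 1) ^ 2 := by
  obtain ⟨m, rfl⟩ : ∃ m, n = m + 1 := ⟨n - 1, by have := NeZero.pos n; omega⟩
  simp [diagCoeff, Fin.sum_univ_succ, Fin.succ_ne_zero]

namespace RankOneBound

variable {h : Fin n → ℝ}

lemma two_mul_sum_mul_sum_le (hB : RankOneBound n h) (z : Fin n → ℝ) :
    2 * (∑ i, h i * z i) * ∑ i, z i ≤ -offDiagForm n z := by
  simpa [realQuadForm_BmapC_realRankOne] using hB 1 z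

lemma two_mul_sum_mul_sum_le_of_eq_zero (hB : RankOneBound n h) {k : Fin n} {z : Fin n → ℝ}
    (hz : z k = 0) :
    2 * (∑ i, h i * z i) * ∑ i, z i ≤ -∑ i, diagCoeff n i * z i ^ 2 - offDiagForm n z := by
  refine le_of_forall_pos_le_sq_mul_add (b := ∑ i, diagCoeff n i * z i ^ 2) fun K hK => ?_
  obtain ⟨v, hv, hvK⟩ := exists_pos_add_one_eq_mul_of_ne k hK
  have hvw : ∀ l, v l * (z / v) l = z l := fun l => mul_div_cancel₀ _ (hv l).ne'
  have hdiag : ∀ l, diagCoeff n l * (v (l + 1) ^ 2 - v l ^ 2) * (z / v) l ^ 2 =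
      K ^ 2 * (diagCoeff n l * z l ^ 2) - diagCoeff n l * z l ^ 2 := by
    intro l
    by_cases hl : l = k
    · subst hl
      simp [hz]
    · rw [hvK l hl, Pi.div_apply]
      field_simp [(hv l).ne']
  have h := hB v (z / v)
  simp only [realQuadForm_BmapC_realRankOne, hvw, hdiag, Finset.sum_sub_distrib,
    ← Finset.mul_sum] at h
  rw [show v * (z / v) = z from funext hvw] at h
  linarith

end RankOneBound

def testVec (k : Fin n) (x y r : ℝ) : Fin n → ℝ :=
  fun l => if l = 0 then x else if l = k then y else r

section TestVec

variable {k : Fin n} {x y r : ℝ}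

lemma testVec_zero : testVec k x y r 0 = x := if_pos rfl

lemma testVec_self (hk : k ≠ 0) : testVec k x y r k = y := by simp [testVec, hk]

lemma sum_testVec (hk : k ≠ 0) (F : Fin n → ℝ → ℝ) :
    ∑ l, F l (testVec k x y r l) = F 0 x + F k y + (∑ l, F l r - F 0 r - F k r) := by
  have h : ∀ l, F l (testVec k x y r l) = F l r + (if l = 0 then F 0 x - F 0 r else 0) +
      (if l = k then F k y - F k r else 0) := by
    intro l
    by_cases h0 : l = 0
    · subst h0
      simp [testVec, Ne.symm hk]
    · by_cases hlk : l = k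
      · subst hlk
        simp [testVec, h0]
      · simp [testVec, h0, hlk]
  simp only [h, Finset.sum_add_distrib, Finset.sum_ite_eq', Finset.mem_univ, if_true]
  ring

lemma sum_testVec_eq (hk : k ≠ 0) : ∑ l, testVec k x y r l = x + y + ((n : ℝ) - 2) * r := by
  rw [sum_testVec hk fun _ s => s, Finset.sum_const, Finset.card_univ, Fintype.card_fin,
    nsmul_eq_mul]
  ring

lemma sum_testVec_sq (hk : k ≠ 0) :
    ∑ l, testVec k x y r l ^ 2 = x ^ 2 + y ^ 2 + ((n : ℝ) - 2) * r ^ 2 := by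
  rw [sum_testVec hk fun _ s => s ^ 2, Finset.sum_const, Finset.card_univ, Fintype.card_fin,
    nsmul_eq_mul]
  ring

lemma sum_mul_testVec (hk : k ≠ 0) (h : Fin n → ℝ) :
    ∑ l, h l * testVec k x y r l = x * h 0 + y * h k + r * (∑ l, h l - h 0 - h k) := by
  rw [sum_testVec hk fun l s => h l * s, ← Finset.sum_mul]
  ring

lemma sum_diagCoeff_mul_testVec_sq (hk : k ≠ 0) :
    ∑ l, diagCoeff n l * testVec k x y r l ^ 2 =
      x ^ 2 + ((n : ℝ) - 1) ^ 2 * (y ^ 2 + ((n : ℝ) - 2) * r ^ 2) := by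
  rw [sum_testVec hk fun l s => diagCoeff n l * s ^ 2, ← Finset.sum_mul, sum_diagCoeff]
  simp only [diagCoeff, if_true, if_neg hk]
  ring

end TestVec

lemma RankOneBound.first_order_bound {h : Fin n → ℝ} (hB : RankOneBound n h) (hn : 3 ≤ n)
    {k : Fin n} (hk : k ≠ 0) {t : ℝ} (ht : 0 < t) :
    2 * ((2 * ((n : ℝ) - 1) * ((n : ℝ) - 2) * t + 1) * h 0 + ((n : ℝ) - 1) * h k - ∑ i, h i) +
      ((n : ℝ) - 1) * ((n : ℝ) - 2) * (2 + t) ≤ 0 := by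
  have hn' : (3 : ℝ) ≤ n := by exact_mod_cast hn
  have h1 := hB.two_mul_sum_mul_sum_le (testVec k (((n : ℝ) - 1) * (1 - t)) (-1) (-1))
  have h2 := hB.two_mul_sum_mul_sum_le_of_eq_zero
    (testVec_self hk (x := ((n : ℝ) - 2) * (1 + t)) (y := 0) (r := -1))
  rw [offDiagForm_eq] at h1 h2
  simp only [testVec_zero, sum_testVec_eq hk, sum_testVec_sq hk, sum_mul_testVec hk,
    sum_diagCoeff_mul_testVec_sq hk] at h1 h2
  have hc : 0 < ((n : ℝ) - 1) * ((n : ℝ) - 2) * t := by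
    have : (0 : ℝ) < (n : ℝ) - 2 := by linarith
    have : (0 : ℝ) < (n : ℝ) - 1 := by linarith
    positivity
  refine nonpos_of_mul_nonpos_right ?_ hc
  unfold p q at h1 h2
  linear_combination ((n : ℝ) - 2) ^ 2 * h1 + ((n : ℝ) - 1) ^ 2 * h2

lemma not_rankOneBound (hn : 3 ≤ n) (h : Fin n → ℝ) : ¬RankOneBound n h := by
  intro hB
  obtain ⟨t, ht, hth⟩ : ∃ t : ℝ, 0 < t ∧ 0 < 2 + t + 4 * t * h 0 := by
    refine ⟨1 / (4 * h 0 ^ 2 + 1), by positivity, ?_⟩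
    field_simp
    nlinarith [sq_nonneg (2 * h 0 + 1)]
  have hsum := Finset.sum_nonpos (s := Finset.univ.erase 0) fun k hk =>
    hB.first_order_bound hn (Finset.ne_of_mem_erase hk) ht
  rw [Finset.sum_erase_eq_sub (Finset.mem_univ 0)] at hsum
  simp only [Finset.sum_add_distrib, Finset.sum_sub_distrib, ← Finset.mul_sum, Finset.sum_const,
    Finset.card_univ, Fintype.card_fin, nsmul_eq_mul] at hsum
  have hn' : (3 : ℝ) ≤ n := by exact_mod_cast hn
  have hc : 0 < ((n : ℝ) - 1) ^ 2 * ((n : ℝ) - 2) := by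
    have : (0 : ℝ) < (n : ℝ) - 1 := by linarith
    have : (0 : ℝ) < (n : ℝ) - 2 := by linarith
    positivity
  -- `hsum` says `(n - 1)² (n - 2) (2 + t + 4 t h 0) ≤ 0`
  linarith [mul_pos hc hth]

end BmapC

/-- **Indecomposability of the exotic drift `B`, complex case.**
For `n ≥ 3` there exist no matrix `H ∈ M_n(ℂ)` and no real-linear map `B'` on complex Hermitian
matrices sending positive semidefinite matrices to positive semidefinite matrices such that
`B X = H X + X H* + B' X` for every Hermitian `X`; i.e. `B` is not the sum of an endomorphism
of the PSD cone and an element of the Lie algebra of its automorphism group. -/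
theorem BmapC_indecomposable (n : ℕ) [NeZero n] (hn : 3 ≤ n) :
    ¬∃ (H : Matrix (Fin n) (Fin n) ℂ)
        (B' : Matrix (Fin n) (Fin n) ℂ →ₗ[ℝ] Matrix (Fin n) (Fin n) ℂ),
      (∀ X : Matrix (Fin n) (Fin n) ℂ, X.PosSemidef → (B' X).PosSemidef) ∧
      (∀ X : Matrix (Fin n) (Fin n) ℂ, X.IsHermitian → BmapC n X = H * X + X * Hᴴ + B' X) := by
  rintro ⟨H, B', hpos, hdec⟩
  exact BmapC.not_rankOneBound hn _ (BmapC.rankOneBound_of_decomposition H B' hpos hdec)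
end
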